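/- arXiv:2104.11045 — 6 statements merged into one kernel-verified Lean document; each statement's English description precedes it below -/
import Mathlib

section
/- Generalized Newton–MacLaurin inequality: Let λ ∈ Γ_k and let integers satisfy n ≥ k > l ≥ 0, n ≥ r > s ≥ 0, k ≥ r and l ≥ s. Then ((σ_k(λ)/C_n^k)/(σ_l(λ)/C_n^l))^{1/(k−l)} ≤ ((σ_r(λ)/C_n^r)/(σ_s(λ)/C_n^s))^{1/(r−s)}. -/
/-- The `m`-th elementary symmetric function of `x ∈ ℝⁿ`. -/
noncomputable def esym (n m : ℕ) (x : Fin n → ℝ) : ℝ :=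
  ∑ s ∈ Finset.univ.powersetCard m, ∏ i ∈ s, x i

/-- The Gårding cone `Γ_k ⊂ ℝⁿ`. -/
def GardingCone (n k : ℕ) : Set (Fin n → ℝ) :=
  {x | ∀ i : ℕ, 1 ≤ i → i ≤ k → 0 < esym n i x}

/-!
Newton's inequalities `E_m E_{m+2} ≤ E_{m+1}²` for `E_i = σ_i / C(n, i)` hold for every real
`λ`: the polynomial `∏ (1 + λ_i X)`, whose coefficients are the `σ_i`, is real-rooted, and
differentiating `m` times, reflecting, and differentiating again cuts it down to the real-rooted
quadratic `c (E_{m+2} + 2 E_{m+1} X + E_m X²)`, `c > 0`, whose discriminant is nonnegative.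
On `Γ_k` the `E_i`, `i ≤ k`, are positive, so `i ↦ log E_i` is concave on `[0, k]`, and the
claim says that the slope of its chord over `[l, k]` is at most that over `[s, r]`.
-/

open Finset Real Polynomial

namespace Polynomial

theorem Splits.derivative {p : ℝ[X]} (hp : p.Splits) : p.derivative.Splits := by
  rw [splits_iff_card_roots] at hp ⊢
  have := p.card_roots_le_derivative
  have := p.derivative.card_roots'
  have := p.natDegree_derivative_le
  omega

theorem Splits.iterate_derivative {p : ℝ[X]} (hp : p.Splits) (k : ℕ) :
    (Polynomial.derivative^[k] p).Splits := by
  induction k with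
  | zero => exact hp
  | succ k ih => rw [Function.iterate_succ_apply']; exact ih.derivative

variable {K : Type*} [Field K]

theorem Splits.reverse {p : K[X]} (hp : p.Splits) : p.reverse.Splits := by
  have hlin : ∀ s : Multiset K, ((s.map fun a => X - C a).prod.reverse).Splits := by
    intro s
    induction s using Multiset.induction with
    | empty => rw [Multiset.map_zero, Multiset.prod_zero, ← C_1, reverse_C]; exact Splits.C 1
    | cons a s ih =>
      rw [Multiset.map_cons, Multiset.prod_cons, reverse_mul_of_domain]
      exact (Splits.of_natDegree_le_one ((X - C a).reverse_natDegree_le.trans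
        (natDegree_X_sub_C_le a))).mul ih
  rw [hp.eq_prod_roots, reverse_mul_of_domain, reverse_C]
  exact (Splits.C _).mul (hlin _)

theorem Splits.reflect {p : K[X]} (hp : p.Splits) {N : ℕ} (hN : p.natDegree ≤ N) :
    (p.reflect N).Splits := by
  have h : p.reflect N = p.reverse * X ^ (N - p.natDegree) := by
    rw [← reflect_one, Polynomial.reverse, ← reflect_mul _ _ le_rfl (by simp), mul_one,
      Nat.add_sub_cancel' hN]
  rw [h]
  exact hp.reverse.mul (Splits.X_pow _)

theorem Splits.four_mul_coeff_zero_mul_coeff_two_le [LinearOrder K] [IsStrictOrderedRing K]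
    {q : K[X]} (hq : q.Splits) (hdeg : q.natDegree ≤ 2) :
    4 * (q.coeff 0 * q.coeff 2) ≤ q.coeff 1 ^ 2 := by
  by_cases hconst : q.degree = 0
  · rw [eq_C_of_degree_eq_zero hconst]
    simp
  obtain ⟨x, hx⟩ := hq.exists_eval_eq_zero hconst
  rw [eval_eq_sum_range' (Nat.lt_succ_of_le hdeg)] at hx
  simp only [sum_range_succ, sum_range_zero] at hx
  have hdisc := discrim_eq_sq_of_quadratic_eq_zero (a := q.coeff 2) (b := q.coeff 1)
    (c := q.coeff 0) (x := x) (by linear_combination hx)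
  rw [discrim] at hdisc
  nlinarith [sq_nonneg (2 * q.coeff 2 * x + q.coeff 1)]

variable [CharZero K]

theorem coeff_derivative_div_choose {p : K[X]} {N : ℕ} (hp : p.natDegree ≤ N + 1) (j : ℕ) :
    p.derivative.coeff j / N.choose j =
      (N + 1) * (p.coeff (j + 1) / (N + 1).choose (j + 1)) := by
  rcases le_or_gt j N with hj | hj
  · have hc : (N.choose j : K) ≠ 0 := by exact_mod_cast (Nat.choose_pos hj).ne'
    have hc' : ((N + 1).choose (j + 1) : K) ≠ 0 := by
      exact_mod_cast (Nat.choose_pos (by omega)).ne'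
    have hchoose : ((N + 1 : ℕ) : K) * N.choose j = (N + 1).choose (j + 1) * (j + 1 : ℕ) := by
      exact_mod_cast Nat.add_one_mul_choose_eq N j
    push_cast at hchoose
    have hratio : ((j : K) + 1) / N.choose j = (N + 1) / (N + 1).choose (j + 1) := by
      rw [div_eq_div_iff hc hc']
      linear_combination -hchoose
    rw [coeff_derivative, mul_div_assoc, hratio]
    ring
  · rw [coeff_derivative, coeff_eq_zero_of_natDegree_lt (by omega)]
    simp

theorem coeff_iterate_derivative_div_choose {p : K[X]} {N k : ℕ} (hp : p.natDegree ≤ N + k)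
    (j : ℕ) : (derivative^[k] p).coeff j / N.choose j =
      (N + k).descFactorial k * (p.coeff (j + k) / (N + k).choose (j + k)) := by
  induction k generalizing p with
  | zero => simp
  | succ k ih =>
    have hp' : p.derivative.natDegree ≤ N + k := p.natDegree_derivative_le.trans (by omega)
    rw [Function.iterate_succ_apply, ih hp', coeff_derivative_div_choose (N := N + k) (by omega),
      ← add_assoc, Nat.succ_descFactorial_succ]
    push_cast
    ring_nf

theorem Splits.coeff_div_choose_mul_le_sq {p : ℝ[X]} (hp : p.Splits) {N m : ℕ}
    (hdeg : p.natDegree ≤ N) (hm : m + 2 ≤ N) :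
    p.coeff m / N.choose m * (p.coeff (m + 2) / N.choose (m + 2)) ≤
      (p.coeff (m + 1) / N.choose (m + 1)) ^ 2 := by
  obtain ⟨e, rfl⟩ : ∃ e, N = e + 2 + m := ⟨N - (m + 2), by omega⟩
  set a : ℕ → ℝ := fun i => p.coeff i / (e + 2 + m).choose i
  set D := Polynomial.derivative^[m] p
  have hD : D.natDegree ≤ e + 2 := (p.natDegree_iterate_derivative m).trans (by omega)
  set R := D.reflect (e + 2)
  have hR : R.natDegree ≤ 2 + e := natDegree_reflect_le.trans (by omega)
  set Q := Polynomial.derivative^[e] R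
  have hQ : Q.natDegree ≤ 2 := (R.natDegree_iterate_derivative e).trans (by omega)
  set c : ℝ := (2 + e).descFactorial e * (e + 2 + m).descFactorial m
  have hc : 0 < c := by
    have := Nat.descFactorial_pos.mpr (show e ≤ 2 + e by omega)
    have := Nat.descFactorial_pos.mpr (show m ≤ e + 2 + m by omega)
    positivity
  have hQcoeff : ∀ j ≤ 2, Q.coeff j / (2 : ℕ).choose j = c * a (2 - j + m) := by
    intro j hj
    rw [coeff_iterate_derivative_div_choose hR, coeff_reflect, revAt_le (by omega),
      show e + 2 - (j + e) = 2 - j by omega, ← Nat.choose_symm (show j + e ≤ 2 + e by omega),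
      show 2 + e - (j + e) = 2 - j by omega, add_comm 2 e,
      coeff_iterate_derivative_div_choose hdeg]
    simp only [c, a, add_comm 2 e]
    ring
  have h0 : Q.coeff 0 = c * a (m + 2) := by simpa [add_comm] using hQcoeff 0 (by norm_num)
  have h1 : Q.coeff 1 = 2 * (c * a (m + 1)) := by
    have := hQcoeff 1 (by norm_num)
    norm_num [add_comm] at this
    linear_combination 2 * this
  have h2 : Q.coeff 2 = c * a m := by simpa using hQcoeff 2 (by norm_num)
  have hdisc : 4 * (Q.coeff 0 * Q.coeff 2) ≤ Q.coeff 1 ^ 2 :=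
    (hp.iterate_derivative m |>.reflect hD |>.iterate_derivative e)
      |>.four_mul_coeff_zero_mul_coeff_two_le hQ
  rw [h0, h1, h2] at hdisc
  change a m * a (m + 2) ≤ a (m + 1) ^ 2
  refine le_of_mul_le_mul_left ?_ (by positivity : 0 < 4 * c ^ 2)
  linear_combination hdisc

end Polynomial

theorem coeff_reflect_prod_X_add_C_eq_esym {n j : ℕ} (x : Fin n → ℝ) (hj : j ≤ n) :
    ((∏ i, (X + C (x i))).reflect n).coeff j = esym n j x := by
  rw [coeff_reflect, revAt_le hj, prod_X_add_C_coeff _ _ (by simp)]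
  simp [esym, Nat.sub_sub_self hj]

theorem esym_div_choose_mul_le_sq {n m : ℕ} (hm : m + 2 ≤ n) (x : Fin n → ℝ) :
    esym n m x / n.choose m * (esym n (m + 2) x / n.choose (m + 2)) ≤
      (esym n (m + 1) x / n.choose (m + 1)) ^ 2 := by
  have hsplits : (∏ i, (X + C (x i))).Splits := Splits.prod fun i _ => Splits.X_add_C (x i)
  have hdeg : (∏ i, (X + C (x i))).natDegree ≤ n :=
    (natDegree_prod_le _ _).trans (by simp)
  rw [← coeff_reflect_prod_X_add_C_eq_esym x (by omega), ← coeff_reflect_prod_X_add_C_eq_esym x hm,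
    ← coeff_reflect_prod_X_add_C_eq_esym x (by omega)]
  exact (hsplits.reflect hdeg).coeff_div_choose_mul_le_sq
    (natDegree_reflect_le.trans (max_le le_rfl hdeg)) hm

namespace Finset

variable {ι 𝕜 : Type*} {s t : Finset ι} {f : ι → 𝕜}

theorem card_mul_sum_le_card_mul_sum [CommSemiring 𝕜] [PartialOrder 𝕜] [IsOrderedRing 𝕜]
    (h : ∀ i ∈ s, ∀ j ∈ t, f i ≤ f j) : #t * ∑ i ∈ s, f i ≤ #s * ∑ j ∈ t, f j :=
  calc #t * ∑ i ∈ s, f i = ∑ i ∈ s, ∑ _j ∈ t, f i := by simp [mul_sum]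
    _ ≤ ∑ _i ∈ s, ∑ j ∈ t, f j :=
      sum_le_sum fun i hi => sum_le_sum fun j hj => h i hi j hj
    _ = #s * ∑ j ∈ t, f j := by simp

variable [DecidableEq ι] [Field 𝕜] [LinearOrder 𝕜] [IsStrictOrderedRing 𝕜]

theorem sum_div_card_le_sum_union_div_card (hst : Disjoint s t) (hs : s.Nonempty)
    (h : ∀ i ∈ s, ∀ j ∈ t, f i ≤ f j) :
    (∑ i ∈ s, f i) / #s ≤ (∑ i ∈ s ∪ t, f i) / #(s ∪ t) := by
  have := hs.card_pos
  rw [sum_union hst, card_union_of_disjoint hst, div_le_div_iff₀ (by positivity) (by positivity)]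
  push_cast
  linear_combination card_mul_sum_le_card_mul_sum h

theorem sum_union_div_card_le_sum_div_card (hst : Disjoint s t) (ht : t.Nonempty)
    (h : ∀ i ∈ s, ∀ j ∈ t, f i ≤ f j) :
    (∑ i ∈ s ∪ t, f i) / #(s ∪ t) ≤ (∑ j ∈ t, f j) / #t := by
  have := ht.card_pos
  rw [sum_union hst, card_union_of_disjoint hst, div_le_div_iff₀ (by positivity) (by positivity)]
  push_cast
  linear_combination card_mul_sum_le_card_mul_sum h

end Finset

theorem slope_le_slope_of_add_le_two_mul {f : ℕ → ℝ} {k l r s : ℕ}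
    (hf : ∀ m, m + 2 ≤ k → f m + f (m + 2) ≤ 2 * f (m + 1))
    (hlk : l < k) (hsr : s < r) (hrk : r ≤ k) (hsl : s ≤ l) :
    (f k - f l) / ((k : ℝ) - l) ≤ (f r - f s) / ((r : ℝ) - s) := by
  set d : ℕ → ℝ := fun i => f (i + 1) - f i
  have hd : ∀ i j, i ≤ j → j < k → d j ≤ d i := by
    intro i j hij
    induction j, hij using Nat.le_induction with
    | base => exact fun _ => le_rfl
    | succ j _ ih =>
      intro hj
      have := hf j (by omega)
      exact le_trans (by simp only [d]; linarith) (ih (by omega))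
  have hslope : ∀ a b, a ≤ b →
      (f b - f a) / ((b : ℝ) - a) = (∑ i ∈ Ico a b, d i) / #(Ico a b) := by
    intro a b hab
    rw [sum_Ico_sub f hab, Nat.card_Ico, Nat.cast_sub hab]
  have hsplit : ∀ a b, a ≤ b → b ≤ k → Ico b k ∪ Ico a b = Ico a k ∧
      Disjoint (Ico b k) (Ico a b) ∧ ∀ i ∈ Ico b k, ∀ j ∈ Ico a b, d i ≤ d j := by
    intro a b hab hbk
    refine ⟨by rw [union_comm, Ico_union_Ico_eq_Ico hab hbk],
      (Ico_disjoint_Ico_consecutive a b k).symm, fun i hi j hj => ?_⟩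
    simp only [mem_Ico] at hi hj
    exact hd j i (by omega) (by omega)
  obtain ⟨hunion₁, hdisj₁, hle₁⟩ := hsplit s l hsl hlk.le
  obtain ⟨hunion₂, hdisj₂, hle₂⟩ := hsplit s r hsr.le hrk
  rw [hslope l k hlk.le, hslope s r hsr.le]
  calc (∑ i ∈ Ico l k, d i) / #(Ico l k)
      ≤ (∑ i ∈ Ico s k, d i) / #(Ico s k) :=
        hunion₁ ▸ sum_div_card_le_sum_union_div_card hdisj₁ (nonempty_Ico.mpr hlk) hle₁
    _ ≤ (∑ i ∈ Ico s r, d i) / #(Ico s r) :=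
        hunion₂ ▸ sum_union_div_card_le_sum_div_card hdisj₂ (nonempty_Ico.mpr hsr) hle₂

theorem div_rpow_le_div_rpow_of_mul_le_sq {p : ℕ → ℝ} {k l r s : ℕ}
    (hpos : ∀ i ≤ k, 0 < p i)
    (hp : ∀ m, m + 2 ≤ k → p m * p (m + 2) ≤ p (m + 1) ^ 2)
    (hlk : l < k) (hsr : s < r) (hrk : r ≤ k) (hsl : s ≤ l) :
    (p k / p l) ^ (1 / ((k : ℝ) - l)) ≤ (p r / p s) ^ (1 / ((r : ℝ) - s)) := by
  have hlog : ∀ m, m + 2 ≤ k → log (p m) + log (p (m + 2)) ≤ 2 * log (p (m + 1)) := by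
    intro m hm
    rw [← log_mul (hpos m (by omega)).ne' (hpos (m + 2) hm).ne']
    calc log (p m * p (m + 2)) ≤ log (p (m + 1) ^ 2) :=
          log_le_log (mul_pos (hpos m (by omega)) (hpos (m + 2) hm)) (hp m hm)
      _ = 2 * log (p (m + 1)) := by rw [log_pow, Nat.cast_ofNat]
  have hk := hpos k le_rfl
  have hl := hpos l hlk.le
  have hr := hpos r hrk
  have hs := hpos s (by omega)
  rw [rpow_def_of_pos (div_pos hk hl), rpow_def_of_pos (div_pos hr hs), exp_le_exp,
    log_div hk.ne' hl.ne', log_div hr.ne' hs.ne', mul_one_div, mul_one_div]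
  exact slope_le_slope_of_add_le_two_mul hlog hlk hsr hrk hsl

theorem stmt_1_general (n k l r s : ℕ) (hkn : k ≤ n) (hlk : l < k) (hsr : s < r)
    (hrk : r ≤ k) (hsl : s ≤ l) (lam : Fin n → ℝ) (hlam : lam ∈ GardingCone n k) :
    ((esym n k lam / (n.choose k : ℝ)) / (esym n l lam / (n.choose l : ℝ)))
        ^ ((1 : ℝ) / ((k : ℝ) - (l : ℝ)))
      ≤ ((esym n r lam / (n.choose r : ℝ)) / (esym n s lam / (n.choose s : ℝ)))
        ^ ((1 : ℝ) / ((r : ℝ) - (s : ℝ))) := by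
  have hpos : ∀ i ≤ k, 0 < esym n i lam / (n.choose i : ℝ) := by
    intro i hik
    have hchoose : (0 : ℝ) < n.choose i := by exact_mod_cast Nat.choose_pos (by omega)
    rcases Nat.eq_zero_or_pos i with rfl | hi
    · simp [esym]
    · exact div_pos (hlam i hi hik) hchoose
  exact div_rpow_le_div_rpow_of_mul_le_sq hpos
    (fun m hm => esym_div_choose_mul_le_sq (by omega) lam) hlk hsr hrk hsl

/-- Generalized Newton–MacLaurin inequality. -/
theorem stmt_1 (n k l r s : ℕ) (hkn : k ≤ n) (hlk : l < k) (hrn : r ≤ n) (hsr : s < r)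
    (hrk : r ≤ k) (hsl : s ≤ l) (lam : Fin n → ℝ) (hlam : lam ∈ GardingCone n k) :
    ((esym n k lam / (n.choose k : ℝ)) / (esym n l lam / (n.choose l : ℝ)))
        ^ ((1 : ℝ) / ((k : ℝ) - (l : ℝ)))
      ≤ ((esym n r lam / (n.choose r : ℝ)) / (esym n s lam / (n.choose s : ℝ)))
        ^ ((1 : ℝ) / ((r : ℝ) - (s : ℝ))) :=
  stmt_1_general n k l r s hkn hlk hsr hrk hsl lam hlam
end

section
/- Equality case of the generalized Newton–MacLaurin inequality: Let λ ∈ Γ_k and let integers satisfy n ≥ k > l ≥ 0, n ≥ r > s ≥ 0, k ≥ r, l ≥ s, with (k,l) ≠ (r,s). Then equality ((σ_k(λ)/C_n^k)/(σ_l(λ)/C_n^l))^{1/(k−l)} = ((σ_r(λ)/C_n^r)/(σ_s(λ)/C_n^s))^{1/(r−s)} holds if and only if λ_1 = λ_2 = ⋯ = λ_n. -/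
/-! With `p_m = σ_m / C(n, m)`, Newton's inequality `p_m p_{m+2} ≤ p_{m+1}²`, with equality
(when `p_{m+1} ≠ 0`) only at constant vectors, is proved by induction on `n`: by Rolle the
derivative of `∏ (X + x_i)` is `n ∏ (X + μ_j)` for a real `μ ∈ ℝⁿ⁻¹` with the same
`p_0, …, p_{n-1}`. For `n = m + 2` the substitution `a_i = ∏_{l ≠ i} x_l` turns it into
`p_0 p_2 ≤ p_1²` for `a`, that is `∑_{i,j} (a_i - a_j)² ≥ 0`.

On `Γ_k` all `p_m` with `m ≤ k` are positive, so for a nonconstant `λ` the sequence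
`m ↦ log p_m` is strictly concave on `[0, k]`. Both sides of the identity are exponentials of
chord slopes of this sequence, and a chord slope of a strictly concave sequence strictly decreases
when either endpoint moves to the right. -/

open Finset Polynomial

noncomputable def esymMean (n m : ℕ) (x : Fin n → ℝ) : ℝ := esym n m x / n.choose m

section ElementarySymmetric

variable {n : ℕ}

lemma esym_zero (x : Fin n → ℝ) : esym n 0 x = 1 := by
  simp [esym]

lemma esym_one (x : Fin n → ℝ) : esym n 1 x = ∑ i, x i := by
  simp [esym, powersetCard_one]

lemma esym_eq_eval_esymm (m : ℕ) (x : Fin n → ℝ) :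
    esym n m x = MvPolynomial.eval x (MvPolynomial.esymm (Fin n) ℝ m) := by
  simp [esym, MvPolynomial.esymm]

lemma two_mul_esym_two (x : Fin n → ℝ) :
    2 * esym n 2 x = (∑ i, x i) ^ 2 - ∑ i, x i ^ 2 := by
  have h := congrArg (MvPolynomial.eval x) (MvPolynomial.mul_esymm_eq_sum (Fin n) ℝ 2)
  rw [show {a ∈ antidiagonal 2 | a.1 < 2} = {(0, 2), (1, 1)} by decide, sum_pair (by decide)] at h
  simp only [map_mul, map_pow, map_neg, map_one, map_add, map_sum, map_natCast,
    MvPolynomial.eval_X, MvPolynomial.psum, ← esym_eq_eval_esymm, esym_zero, esym_one, pow_one] at h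
  linear_combination h

lemma esym_const (m : ℕ) (c : ℝ) : esym n m (fun _ => c) = n.choose m * c ^ m := by
  rw [esym, Finset.sum_congr rfl fun t ht => by rw [prod_const, (mem_powersetCard_univ.1 ht)],
    sum_const, card_powersetCard, card_univ, Fintype.card_fin, nsmul_eq_mul]

lemma esym_eq_sum_prod_compl {m j : ℕ} (h : m + j = n) (x : Fin n → ℝ) :
    esym n m x = ∑ t ∈ univ.powersetCard j, ∏ i ∈ tᶜ, x i := by
  refine sum_nbij' (fun t => tᶜ) (fun t => tᶜ) ?_ ?_ (fun t _ => compl_compl t)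
    (fun t _ => compl_compl t) (fun t _ => by rw [compl_compl])
  all_goals
    intro t ht
    rw [mem_powersetCard_univ] at ht ⊢
    rw [card_compl, Fintype.card_fin]
    omega

lemma coeff_prod_X_add_C {m : ℕ} (h : m ≤ n) (x : Fin n → ℝ) :
    (∏ i, (X + C (x i))).coeff (n - m) = esym n m x := by
  rw [prod_X_add_C_coeff _ x (by simp), card_univ, Fintype.card_fin, Nat.sub_sub_self h]
  rfl

end ElementarySymmetric

lemma sum_sum_sub_sq {ι : Type*} [Fintype ι] (x : ι → ℝ) :
    ∑ i, ∑ j, (x i - x j) ^ 2 = 2 * Fintype.card ι * ∑ i, x i ^ 2 - 2 * (∑ i, x i) ^ 2 := by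
  simp only [sub_sq, sum_add_distrib, sum_sub_distrib, sum_const, card_univ, nsmul_eq_mul,
    ← mul_sum, ← sum_mul, sq (∑ i, x i), mul_assoc]
  ring

section Variance

variable {n : ℕ}

lemma esymMean_one_sq_sub_esymMean_two (hn : 2 ≤ n) (x : Fin n → ℝ) :
    esymMean n 1 x ^ 2 - esymMean n 2 x = (∑ i, ∑ j, (x i - x j) ^ 2) / (2 * n ^ 2 * (n - 1)) := by
  have hn' : (2 : ℝ) ≤ n := by exact_mod_cast hn
  have h2 := two_mul_esym_two x
  rw [esymMean, esymMean, esym_one, Nat.choose_one_right, Nat.cast_choose_two, sum_sum_sub_sq,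
    Fintype.card_fin]
  have : (n : ℝ) - 1 ≠ 0 := by linarith
  have : (n : ℝ) ≠ 0 := by linarith
  field_simp
  linear_combination (-(n : ℝ)) * h2

lemma esymMean_two_le_esymMean_one_sq (hn : 2 ≤ n) (x : Fin n → ℝ) :
    esymMean n 2 x ≤ esymMean n 1 x ^ 2 := by
  have hn' : (2 : ℝ) ≤ n := by exact_mod_cast hn
  rw [← sub_nonneg, esymMean_one_sq_sub_esymMean_two hn]
  have : (0 : ℝ) < n - 1 := by linarith
  positivity

lemma esymMean_two_eq_esymMean_one_sq_iff (hn : 2 ≤ n) (x : Fin n → ℝ) :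
    esymMean n 2 x = esymMean n 1 x ^ 2 ↔ ∀ i j, x i = x j := by
  have hn' : (2 : ℝ) ≤ n := by exact_mod_cast hn
  have hd : (2 * n ^ 2 * (n - 1) : ℝ) ≠ 0 := by
    have : (0 : ℝ) < n - 1 := by linarith
    positivity
  rw [eq_comm, ← sub_eq_zero, esymMean_one_sq_sub_esymMean_two hn, div_eq_zero_iff, or_iff_left hd]
  simp only [sum_eq_zero_iff_of_nonneg fun i _ => sum_nonneg fun j _ => sq_nonneg (x i - x j),
    sum_eq_zero_iff_of_nonneg fun j _ => sq_nonneg _, mem_univ, true_implies, sq_eq_zero_iff,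
    sub_eq_zero]

end Variance

lemma Multiset.exists_univ_map_eq {α : Type*} {n : ℕ} (M : Multiset α) (hM : M.card = n) :
    ∃ x : Fin n → α, univ.val.map x = M := by
  subst hM
  refine ⟨fun i => M.toList.get (i.cast (by simp)), ?_⟩
  rw [Fin.univ_val_map]
  conv_rhs => rw [← Multiset.coe_toList M]
  congr 1
  exact List.ext_get (by simp) fun _ _ _ => by simp

lemma exists_derivative_prod_X_add_C_eq (N : ℕ) (x : Fin (N + 1) → ℝ) :
    ∃ μ : Fin N → ℝ, derivative (∏ i, (X + C (x i))) = C ((N : ℝ) + 1) * ∏ i, (X + C (μ i)) := by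
  set p : ℝ[X] := ∏ i, (X + C (x i))
  have hmonic : p.Monic := monic_prod_of_monic _ _ fun i _ => monic_X_add_C (x i)
  have hdeg : p.natDegree = N + 1 := by
    rw [natDegree_prod_of_monic _ _ fun i _ => monic_X_add_C (x i)]
    simp
  have hroots : p.roots.card = N + 1 := by
    rw [roots_prod _ _ hmonic.ne_zero]
    simp
  have hdeg' : (derivative p).natDegree = N := by simp [hdeg]
  -- Rolle: `p` has `N + 1` real roots, so its derivative has at least `N`.
  have hcard : (derivative p).roots.card = N :=
    le_antisymm (hdeg' ▸ card_roots' _) (by linarith [card_roots_le_derivative p])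
  have hlead : (derivative p).leadingCoeff = (N : ℝ) + 1 := by
    rw [leadingCoeff_derivative, hmonic.leadingCoeff, hdeg]
    push_cast
    ring
  obtain ⟨μ, hμ⟩ := Multiset.exists_univ_map_eq ((derivative p).roots.map Neg.neg) (by simpa)
  refine ⟨μ, ?_⟩
  conv_lhs => rw [← C_leadingCoeff_mul_prod_multiset_X_sub_C (hcard.trans hdeg'.symm)]
  rw [hlead, Finset.prod, ← Function.comp_def (fun a => X + C a) μ, ← Multiset.map_map, hμ,
    Multiset.map_map]
  simp [sub_eq_add_neg]

lemma exists_esymMean_eq_esymMean_succ (N : ℕ) (x : Fin (N + 1) → ℝ) :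
    ∃ μ : Fin N → ℝ, ∀ j ≤ N, esymMean N j μ = esymMean (N + 1) j x := by
  obtain ⟨μ, hμ⟩ := exists_derivative_prod_X_add_C_eq N x
  refine ⟨μ, fun j hj => ?_⟩
  have hcoeff := congrArg (coeff · (N - j)) hμ
  simp only [coeff_derivative, coeff_C_mul] at hcoeff
  rw [show N - j + 1 = N + 1 - j by omega, coeff_prod_X_add_C (by omega),
    coeff_prod_X_add_C hj] at hcoeff
  have hchoose := congrArg (Nat.cast (R := ℝ)) (Nat.choose_mul_succ_eq N j)
  push_cast [Nat.cast_sub hj, Nat.cast_sub (show j ≤ N + 1 by omega)] at hcoeff hchoose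
  have hC : (0 : ℝ) < N.choose j := by exact_mod_cast Nat.choose_pos hj
  have hC' : (0 : ℝ) < (N + 1).choose j := by exact_mod_cast Nat.choose_pos (by omega)
  rw [esymMean, esymMean, div_eq_div_iff hC.ne' hC'.ne']
  refine mul_right_cancel₀ (show (N : ℝ) + 1 ≠ 0 by positivity) ?_
  linear_combination (-esym (N + 1) j x) * hchoose - ((N + 1).choose j : ℝ) * hcoeff

lemma prod_compl_singleton_eq_mul_prod_compl_pair {ι M : Type*} [Fintype ι] [DecidableEq ι]
    [CommMonoid M] (x : ι → M) {i j : ι} (hij : i ≠ j) :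
    ∏ l ∈ {i}ᶜ, x l = x j * ∏ l ∈ {i, j}ᶜ, x l := by
  rw [pair_comm, compl_insert, mul_prod_erase _ _ (by simpa using hij.symm)]

section Complement

variable {n : ℕ}

lemma esym_eq_sum_prod_compl_singleton {m : ℕ} (h : m + 1 = n) (x : Fin n → ℝ) :
    esym n m x = ∑ i, ∏ l ∈ {i}ᶜ, x l := by
  rw [esym_eq_sum_prod_compl h, powersetCard_one, sum_map]
  rfl

lemma esym_mul_esym_self_eq_esym_two {m : ℕ} (h : m + 2 = n) (x : Fin n → ℝ) :
    esym n m x * esym n n x = esym n 2 fun i => ∏ l ∈ {i}ᶜ, x l := by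
  rw [esym_eq_sum_prod_compl h, esym_eq_sum_prod_compl (add_zero n), powersetCard_zero,
    sum_singleton, compl_empty, sum_mul]
  refine sum_congr rfl fun t ht => ?_
  obtain ⟨i, j, hij, rfl⟩ := card_eq_two.1 (mem_powersetCard_univ.1 ht)
  rw [prod_pair hij, prod_compl_singleton_eq_mul_prod_compl_pair x hij,
    prod_compl_singleton_eq_mul_prod_compl_pair x hij.symm, pair_comm j i,
    ← prod_mul_prod_compl {i, j}, prod_pair hij]
  ring

end Complement

lemma esymMean_succ_eq_esymMean_one_prod_compl {m : ℕ} (x : Fin (m + 2) → ℝ) :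
    esymMean (m + 2) (m + 1) x = esymMean (m + 2) 1 fun i => ∏ l ∈ {i}ᶜ, x l := by
  rw [esymMean, esymMean, esym_eq_sum_prod_compl_singleton rfl, esym_one,
    Nat.choose_succ_self_right, Nat.choose_one_right]

lemma esymMean_mul_esymMean_eq_esymMean_two_prod_compl {m : ℕ} (x : Fin (m + 2) → ℝ) :
    esymMean (m + 2) m x * esymMean (m + 2) (m + 2) x
      = esymMean (m + 2) 2 fun i => ∏ l ∈ {i}ᶜ, x l := by
  rw [esymMean, esymMean, esymMean, Nat.choose_self, Nat.cast_one, div_one,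
    ← esym_mul_esym_self_eq_esym_two rfl, Nat.choose_symm_add, div_mul_eq_mul_div]

theorem esymMean_mul_esymMean_le_sq {m n : ℕ} (h : m + 2 ≤ n) (x : Fin n → ℝ) :
    esymMean n m x * esymMean n (m + 2) x ≤ esymMean n (m + 1) x ^ 2 := by
  induction n, h using Nat.le_induction with
  | base =>
    rw [esymMean_mul_esymMean_eq_esymMean_two_prod_compl,
      esymMean_succ_eq_esymMean_one_prod_compl]
    exact esymMean_two_le_esymMean_one_sq le_add_self _
  | succ N hN ih =>
    obtain ⟨μ, hμ⟩ := exists_esymMean_eq_esymMean_succ N x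
    rw [← hμ m (by omega), ← hμ (m + 1) (by omega), ← hμ (m + 2) hN]
    exact ih μ

theorem eq_of_esymMean_mul_esymMean_eq_sq {m n : ℕ} (h : m + 2 ≤ n) {x : Fin n → ℝ}
    (hx : esymMean n (m + 1) x ≠ 0)
    (heq : esymMean n m x * esymMean n (m + 2) x = esymMean n (m + 1) x ^ 2) :
    ∀ i j, x i = x j := by
  induction n, h using Nat.le_induction with
  | base =>
    rw [esymMean_mul_esymMean_eq_esymMean_two_prod_compl,
      esymMean_succ_eq_esymMean_one_prod_compl] at heq
    rw [esymMean_succ_eq_esymMean_one_prod_compl] at hx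
    have ha := (esymMean_two_eq_esymMean_one_sq_iff le_add_self _).1 heq
    have ha0 : ∀ i, ∏ l ∈ {i}ᶜ, x l ≠ 0 := fun i hi =>
      hx (by simp [esymMean, esym_one, fun j => ha j i, hi])
    have hxa : ∀ i, x i * ∏ l ∈ {i}ᶜ, x l = ∏ l, x l := fun i => by
      rw [← prod_mul_prod_compl {i}, prod_singleton]
    intro i j
    have hij := (hxa i).trans (hxa j).symm
    rw [ha i j] at hij
    exact mul_right_cancel₀ (ha0 j) hij
  | succ N hN ih =>
    obtain ⟨μ, hμ⟩ := exists_esymMean_eq_esymMean_succ N x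
    rw [← hμ m (by omega), ← hμ (m + 1) (by omega), ← hμ (m + 2) hN] at heq
    rw [← hμ (m + 1) (by omega)] at hx
    have hμc := ih hx heq
    rw [← esymMean_two_eq_esymMean_one_sq_iff (by omega)] at hμc ⊢
    rwa [hμ 1 (by omega), hμ 2 (by omega)] at hμc

theorem esymMean_mul_esymMean_lt_sq {m n : ℕ} (h : m + 2 ≤ n) {x : Fin n → ℝ}
    (hx : esymMean n (m + 1) x ≠ 0) (hnc : ¬∀ i j, x i = x j) :
    esymMean n m x * esymMean n (m + 2) x < esymMean n (m + 1) x ^ 2 :=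
  (esymMean_mul_esymMean_le_sq h x).lt_of_ne fun heq =>
    hnc (eq_of_esymMean_mul_esymMean_eq_sq h hx heq)

noncomputable def chordSlope (f : ℕ → ℝ) (a b : ℕ) : ℝ := (f b - f a) / ((b : ℝ) - a)

section ChordSlope

variable {f : ℕ → ℝ} {k : ℕ}

lemma succ_sub_lt_succ_sub (hf : ∀ m, m + 2 ≤ k → f m + f (m + 2) < 2 * f (m + 1)) {i j : ℕ}
    (hij : i < j) (hj : j + 1 ≤ k) : f (j + 1) - f j < f (i + 1) - f i := by
  induction j, hij using Nat.le_induction with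
  | base => linarith [hf i hj]
  | succ j hij ih => linarith [hf j hj, ih (by omega)]

lemma chordSlope_succ_right_lt (hf : ∀ m, m + 2 ≤ k → f m + f (m + 2) < 2 * f (m + 1))
    {a b : ℕ} (hab : a < b) (hb : b + 1 ≤ k) : chordSlope f a (b + 1) < chordSlope f a b := by
  have hsum : ∑ _j ∈ Ico a b, (f (b + 1) - f b) < ∑ j ∈ Ico a b, (f (j + 1) - f j) :=
    sum_lt_sum_of_nonempty (nonempty_Ico.2 hab) fun j hj =>
      succ_sub_lt_succ_sub hf (mem_Ico.1 hj).2 hb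
  rw [sum_Ico_sub f hab.le, sum_const, Nat.card_Ico, nsmul_eq_mul, Nat.cast_sub hab.le] at hsum
  have hab' : (a : ℝ) < b := by exact_mod_cast hab
  rw [chordSlope, chordSlope, div_lt_div_iff₀ (by push_cast; linarith) (by linarith)]
  push_cast
  nlinarith

lemma chordSlope_succ_left_lt (hf : ∀ m, m + 2 ≤ k → f m + f (m + 2) < 2 * f (m + 1))
    {a b : ℕ} (hab : a + 1 < b) (hb : b ≤ k) : chordSlope f (a + 1) b < chordSlope f a b := by
  have hsum : ∑ j ∈ Ico (a + 1) b, (f (j + 1) - f j) < ∑ _j ∈ Ico (a + 1) b, (f (a + 1) - f a) :=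
    sum_lt_sum_of_nonempty (nonempty_Ico.2 hab) fun j hj =>
      succ_sub_lt_succ_sub hf (mem_Ico.1 hj).1 (by have := (mem_Ico.1 hj).2; omega)
  rw [sum_Ico_sub f hab.le, sum_const, Nat.card_Ico, nsmul_eq_mul, Nat.cast_sub hab.le] at hsum
  have hab' : (a : ℝ) + 1 < b := by exact_mod_cast hab
  rw [chordSlope, chordSlope, div_lt_div_iff₀ (by push_cast; linarith) (by linarith)]
  push_cast at hsum ⊢
  nlinarith

lemma chordSlope_lt_of_lt_right (hf : ∀ m, m + 2 ≤ k → f m + f (m + 2) < 2 * f (m + 1))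
    {a b c : ℕ} (hab : a < b) (hbc : b < c) (hc : c ≤ k) :
    chordSlope f a c < chordSlope f a b := by
  induction c, hbc using Nat.le_induction with
  | base => exact chordSlope_succ_right_lt hf hab hc
  | succ c hbc ih =>
    exact (chordSlope_succ_right_lt hf (hab.trans hbc) hc).trans (ih (by omega))

lemma chordSlope_lt_of_lt_left (hf : ∀ m, m + 2 ≤ k → f m + f (m + 2) < 2 * f (m + 1))
    {a b c : ℕ} (hab : a < b) (hbc : b < c) (hc : c ≤ k) :
    chordSlope f b c < chordSlope f a c := by
  induction b, hab using Nat.le_induction with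
  | base => exact chordSlope_succ_left_lt hf hbc hc
  | succ b hab ih =>
    exact (chordSlope_succ_left_lt hf hbc hc).trans (ih (by omega))

theorem chordSlope_lt_chordSlope (hf : ∀ m, m + 2 ≤ k → f m + f (m + 2) < 2 * f (m + 1))
    {l r s : ℕ} (hlk : l < k) (hsr : s < r) (hrk : r ≤ k) (hsl : s ≤ l)
    (hne : (k, l) ≠ (r, s)) : chordSlope f l k < chordSlope f s r := by
  rcases hsl.eq_or_lt with rfl | hsl
  · have hrk : r < k := hrk.lt_of_ne fun h => hne (by rw [h])
    exact chordSlope_lt_of_lt_right hf hsr hrk le_rfl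
  · calc chordSlope f l k < chordSlope f s k := chordSlope_lt_of_lt_left hf hsl hlk le_rfl
      _ ≤ chordSlope f s r := by
        rcases hrk.eq_or_lt with rfl | hrk
        · exact le_rfl
        · exact (chordSlope_lt_of_lt_right hf hsr hrk le_rfl).le

end ChordSlope

lemma rpow_div_eq_exp_chordSlope {g : ℕ → ℝ} {a b : ℕ} (ha : 0 < g a) (hb : 0 < g b) :
    (g b / g a) ^ (1 / ((b : ℝ) - a)) = Real.exp (chordSlope (fun m => Real.log (g m)) a b) := by
  rw [Real.rpow_def_of_pos (div_pos hb ha), Real.log_div hb.ne' ha.ne', chordSlope, mul_one_div]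

lemma rpow_pow_div_pow_eq {c : ℝ} (hc : 0 < c) {a b : ℕ} (hab : a < b) :
    (c ^ b / c ^ a) ^ (1 / ((b : ℝ) - a)) = c := by
  rw [← Real.rpow_natCast, ← Real.rpow_natCast, ← Real.rpow_sub hc, one_div,
    Real.rpow_rpow_inv hc.le (sub_ne_zero.2 (by exact_mod_cast hab.ne'))]

lemma esymMean_const {n m : ℕ} (h : m ≤ n) (c : ℝ) : esymMean n m (fun _ => c) = c ^ m := by
  rw [esymMean, esym_const, mul_div_cancel_left₀ _ (by exact_mod_cast (Nat.choose_pos h).ne')]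

lemma esymMean_pos_of_mem_gardingCone {n k m : ℕ} {x : Fin n → ℝ} (hx : x ∈ GardingCone n k)
    (hkn : k ≤ n) (hmk : m ≤ k) : 0 < esymMean n m x := by
  rcases Nat.eq_zero_or_pos m with rfl | hm
  · simp [esymMean, esym_zero]
  · exact div_pos (hx m hm hmk) (by exact_mod_cast Nat.choose_pos (hmk.trans hkn))

theorem esymMean_div_rpow_lt {n k l r s : ℕ} (hkn : k ≤ n) (hlk : l < k) (hsr : s < r)
    (hrk : r ≤ k) (hsl : s ≤ l) (hne : (k, l) ≠ (r, s)) {x : Fin n → ℝ}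
    (hx : x ∈ GardingCone n k) (hnc : ¬∀ i j, x i = x j) :
    (esymMean n k x / esymMean n l x) ^ (1 / ((k : ℝ) - l))
      < (esymMean n r x / esymMean n s x) ^ (1 / ((r : ℝ) - s)) := by
  have hpos : ∀ m ≤ k, 0 < esymMean n m x := fun m hm =>
    esymMean_pos_of_mem_gardingCone hx hkn hm
  have hexp : ∀ a b, a ≤ k → b ≤ k → (esymMean n b x / esymMean n a x) ^ (1 / ((b : ℝ) - a))
      = Real.exp (chordSlope (fun m => Real.log (esymMean n m x)) a b) := fun a b ha hb =>
    rpow_div_eq_exp_chordSlope (g := fun m => esymMean n m x) (hpos a ha) (hpos b hb)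
  rw [hexp l k hlk.le le_rfl, hexp s r (hsl.trans hlk.le) hrk, Real.exp_lt_exp]
  refine chordSlope_lt_chordSlope (fun m hm => ?_) hlk hsr hrk hsl hne
  have hlog := Real.log_lt_log (mul_pos (hpos m (by omega)) (hpos (m + 2) hm))
    (esymMean_mul_esymMean_lt_sq (hm.trans hkn) (hpos (m + 1) (by omega)).ne' hnc)
  rwa [Real.log_mul (hpos m (by omega)).ne' (hpos (m + 2) hm).ne', Real.log_pow,
    Nat.cast_two] at hlog

/-- Equality case of the generalized Newton–MacLaurin inequality. -/
theorem stmt_2 (n k l r s : ℕ) (hkn : k ≤ n) (hlk : l < k) (hrn : r ≤ n) (hsr : s < r)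
    (hrk : r ≤ k) (hsl : s ≤ l) (hne : (k, l) ≠ (r, s))
    (lam : Fin n → ℝ) (hlam : lam ∈ GardingCone n k) :
    ((esym n k lam / (n.choose k : ℝ)) / (esym n l lam / (n.choose l : ℝ)))
          ^ ((1 : ℝ) / ((k : ℝ) - (l : ℝ)))
        = ((esym n r lam / (n.choose r : ℝ)) / (esym n s lam / (n.choose s : ℝ)))
          ^ ((1 : ℝ) / ((r : ℝ) - (s : ℝ)))
      ↔ ∀ i j : Fin n, lam i = lam j := by
  change (esymMean n k lam / esymMean n l lam) ^ _ = (esymMean n r lam / esymMean n s lam) ^ _ ↔ _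
  constructor
  · intro heq
    by_contra hnc
    exact (esymMean_div_rpow_lt hkn hlk hsr hrk hsl hne hlam hnc).ne heq
  · intro hconst
    obtain ⟨c, rfl⟩ : ∃ c, lam = fun _ => c := ⟨lam ⟨0, by omega⟩, funext fun i => hconst _ _⟩
    have hc : 0 < c := by
      simpa [esymMean_const (by omega : 1 ≤ n)] using
        esymMean_pos_of_mem_gardingCone hlam hkn (by omega : 1 ≤ k)
    rw [esymMean_const hkn, esymMean_const (by omega), esymMean_const hrn,
      esymMean_const (by omega), rpow_pow_div_pow_eq hc hlk, rpow_pow_div_pow_eq hc hsr]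
end

section
/- Key ellipticity lemma for σ_k-type operators: Let 1 ≤ k ≤ n−1. There exists a positive constant c_{n,k} depending only on n and k such that the following holds. Let λ = (λ_1,…,λ_n) ∈ ℝⁿ with λ_1 ≥ ⋯ ≥ λ_n, set η_i = Σ_{j=1}^n λ_j − λ_i (so that η_1 ≤ ⋯ ≤ η_n), and assume η ∈ Γ_k. Define f_i = (1/k) · σ_k(η)^{(1/k)−1} · Σ_{l≠i} σ_{k−1}(η|l) for 1 ≤ i ≤ n. Then f_1 ≥ c_{n,k} · Σ_{i=1}^n f_i (note f_1 = min_i f_i and each f_i ≥ 0). -/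
/-- `σ_m(x|p)`: the `m`-th elementary symmetric function of the vector obtained from `x`
by deleting the entry `x p`. -/
noncomputable def esymDel (n m : ℕ) (x : Fin n → ℝ) (p : Fin n) : ℝ :=
  ∑ s ∈ (Finset.univ.erase p).powersetCard m, ∏ i ∈ s, x i

open Finset

-- `esym n m x` and `esymDel n m x p` are `esymmOn x m univ` and `esymmOn x m (univ.erase p)`
-- by `rfl`.
noncomputable def esymmOn {ι R : Type*} [CommSemiring R] (x : ι → R) (j : ℕ)
    (s : Finset ι) : R :=
  ∑ t ∈ s.powersetCard j, ∏ i ∈ t, x i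

theorem Multiset.esymm_cons_succ {R : Type*} [CommSemiring R] (a : R) (s : Multiset R) (j : ℕ) :
    (a ::ₘ s).esymm (j + 1) = s.esymm (j + 1) + a * s.esymm j := by
  simp [Multiset.esymm, Multiset.powersetCard_cons, Multiset.sum_map_mul_left]

section CommSemiring

variable {ι R : Type*} [CommSemiring R] (x : ι → R)

theorem esymmOn_eq_esymm_map (j : ℕ) (s : Finset ι) : esymmOn x j s = (s.val.map x).esymm j :=
  (Finset.esymm_map_val x s j).symm

@[simp]
theorem esymmOn_zero (s : Finset ι) : esymmOn x 0 s = 1 := by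
  simp [esymmOn]

theorem esymmOn_one (s : Finset ι) : esymmOn x 1 s = ∑ i ∈ s, x i := by
  simp [esymmOn, powersetCard_one]

theorem esymmOn_card (s : Finset ι) : esymmOn x s.card s = ∏ i ∈ s, x i := by
  simp [esymmOn]

variable [DecidableEq ι]

theorem esymmOn_succ_insert {s : Finset ι} {a : ι} (ha : a ∉ s) (j : ℕ) :
    esymmOn x (j + 1) (insert a s) = esymmOn x (j + 1) s + x a * esymmOn x j s := by
  simp only [esymmOn_eq_esymm_map, insert_val_of_notMem ha, Multiset.map_cons,
    Multiset.esymm_cons_succ]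

theorem esymmOn_succ_of_mem {s : Finset ι} {a : ι} (ha : a ∈ s) (j : ℕ) :
    esymmOn x (j + 1) s = esymmOn x (j + 1) (s.erase a) + x a * esymmOn x j (s.erase a) := by
  rw [← esymmOn_succ_insert x (notMem_erase a s), insert_erase ha]

theorem sum_esymmOn_erase (j : ℕ) (s : Finset ι) :
    ∑ p ∈ s, esymmOn x j (s.erase p) = (s.card - j : ℕ) * esymmOn x j s := by
  simp only [esymmOn, mul_sum]
  rw [Finset.sum_comm' (t' := s.powersetCard j) (s' := (s \ ·))]
  · refine sum_congr rfl fun t ht => ?_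
    rw [mem_powersetCard] at ht
    rw [sum_const, card_sdiff_of_subset ht.1, ht.2, nsmul_eq_mul]
  · intro p t
    simp only [mem_powersetCard, subset_erase, mem_sdiff]
    tauto

theorem esymmOn_card_sub {s : Finset ι} {j : ℕ} (hj : j ≤ s.card) :
    esymmOn x (s.card - j) s = ∑ t ∈ s.powersetCard j, ∏ i ∈ s \ t, x i := by
  refine sum_nbij' (s \ ·) (s \ ·) ?_ ?_ ?_ ?_ ?_ <;> intro t ht <;> rw [mem_powersetCard] at ht
  · rw [mem_powersetCard, card_sdiff_of_subset ht.1, ht.2]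
    exact ⟨sdiff_subset, by omega⟩
  · rw [mem_powersetCard, card_sdiff_of_subset ht.1, ht.2]
    exact ⟨sdiff_subset, by omega⟩
  · exact Finset.sdiff_sdiff_eq_self ht.1
  · exact Finset.sdiff_sdiff_eq_self ht.1
  · rw [Finset.sdiff_sdiff_eq_self ht.1]

theorem sq_sum_eq_sum_sq_add_two_mul_esymmOn (s : Finset ι) :
    (∑ i ∈ s, x i) ^ 2 = ∑ i ∈ s, x i ^ 2 + 2 * esymmOn x 2 s := by
  induction s using Finset.induction with
  | empty => simp [esymmOn, powersetCard_eq_empty.2 (by simp : (∅ : Finset ι).card < 2)]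
  | insert a s ha ih =>
    rw [sum_insert ha, sum_insert ha, esymmOn_succ_insert x ha, esymmOn_one, add_sq, ih]
    ring

end CommSemiring

theorem Finset.sum_sum_erase {ι R : Type*} [DecidableEq ι] [CommRing R] (s : Finset ι)
    (g : ι → R) : ∑ i ∈ s, ∑ l ∈ s.erase i, g l = (s.card - 1) * ∑ l ∈ s, g l := by
  rw [sum_congr rfl fun i hi => sum_erase_eq_sub hi, sum_sub_distrib, sum_const, nsmul_eq_mul]
  ring

section LinearOrderedCommRing

variable {ι R : Type*} [CommRing R] [LinearOrder R] [IsStrictOrderedRing R] (x : ι → R)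

theorem esymmOn_pos {s : Finset ι} {j : ℕ} (hx : ∀ i ∈ s, 0 < x i) (hj : j ≤ s.card) :
    0 < esymmOn x j s :=
  sum_pos (fun _ ht => prod_pos fun i hi => hx i ((mem_powersetCard.1 ht).1 hi))
    (powersetCard_nonempty.2 hj)

variable [DecidableEq ι]

theorem two_mul_card_mul_esymmOn_two_le (s : Finset ι) :
    2 * s.card * esymmOn x 2 s ≤ (s.card - 1) * esymmOn x 1 s ^ 2 := by
  rw [esymmOn_one]
  linear_combination sq_sum_le_card_mul_sum_sq (s := s) (f := x) -
    (s.card : R) * sq_sum_eq_sum_sq_add_two_mul_esymmOn x s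

theorem esymmOn_mul_esymmOn_le_sq_of_card_eq {s : Finset ι} {i : ℕ} (hs : s.card = i + 2) :
    2 * (i + 2) * (esymmOn x (i + 2) s * esymmOn x i s) ≤ (i + 1) * esymmOn x (i + 1) s ^ 2 := by
  set u : ι → R := fun p => ∏ q ∈ s.erase p, x q
  have hσ1 : esymmOn x (i + 1) s = esymmOn u 1 s := by
    have h := esymmOn_card_sub x (s := s) (j := 1) (by omega)
    rw [hs, show i + 2 - 1 = i + 1 from rfl, powersetCard_one, sum_map] at h
    simp only [h, esymmOn_one, u]
    exact sum_congr rfl fun p _ => by simp [sdiff_singleton_eq_erase]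
  have hσ2 : esymmOn x (i + 2) s * esymmOn x i s = esymmOn u 2 s := by
    have h := esymmOn_card_sub x (s := s) (j := 2) (by omega)
    rw [hs, Nat.add_sub_cancel] at h
    rw [h, ← hs, esymmOn_card, esymmOn, mul_sum]
    refine sum_congr rfl fun t ht => ?_
    obtain ⟨a, b, hab, rfl⟩ := card_eq_two.1 (mem_powersetCard.1 ht).2
    have ha : a ∈ s := (mem_powersetCard.1 ht).1 (mem_insert_self a {b})
    have hb : b ∈ s.erase a :=
      mem_erase.2 ⟨Ne.symm hab, (mem_powersetCard.1 ht).1 (by simp)⟩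
    have ha' : a ∈ s.erase b := mem_erase.2 ⟨hab, ha⟩
    rw [prod_pair hab, ← mul_prod_erase s x ha, ← mul_prod_erase _ x hb]
    simp only [u]
    rw [← mul_prod_erase _ x hb, ← mul_prod_erase _ x ha', erase_right_comm, sdiff_insert,
      sdiff_singleton_eq_erase]
    ring
  have h := two_mul_card_mul_esymmOn_two_le u s
  rw [hs] at h
  push_cast at h
  rw [hσ1, hσ2]
  linarith

theorem esymmOn_erase_pos_of_forall_le {s : Finset ι} {p : ι} {k : ℕ} (hp : p ∈ s)
    (hmin : ∀ i ∈ s, x p ≤ x i) (hs : ∀ j ≤ k, 0 < esymmOn x j s) :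
    ∀ j ≤ k, j < s.card → 0 < esymmOn x j (s.erase p) := by
  intro j
  induction j with
  | zero => simp
  | succ j ih =>
    intro hjk hjs
    rcases lt_or_ge 0 (x p) with hxp | hxp
    · refine esymmOn_pos x (fun i hi => hxp.trans_le (hmin i (mem_of_mem_erase hi))) ?_
      rw [card_erase_of_mem hp]
      omega
    · have hrec := esymmOn_succ_of_mem x hp j
      have hσ := hs (j + 1) hjk
      have hE := ih (by omega) (by omega)
      linarith [mul_nonpos_of_nonpos_of_nonneg hxp hE.le]

end LinearOrderedCommRing

open Polynomial in
theorem Multiset.exists_esymm_eq_of_derivative (s : Multiset ℝ) {m : ℕ} (hs : card s = m + 1) :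
    ∃ t : Multiset ℝ, card t = m ∧
      ∀ j ≤ m, ((m : ℝ) + 1) * t.esymm j = ((m : ℝ) + 1 - j) * s.esymm j := by
  set f : ℝ[X] := (s.map fun a => X - C a).prod with hf
  have hdeg : f.natDegree = m + 1 := by
    rw [hf, natDegree_multiset_prod_X_sub_C_eq_card, hs]
  have hmonic : f.Monic := monic_multiset_prod_of_monic _ _ fun a _ => monic_X_sub_C a
  have hdeg' : (derivative f).natDegree ≤ m := by
    have h := natDegree_derivative_le f
    omega
  -- Rolle: between consecutive roots of `f` lies a root of `f'`
  have hroots : m ≤ card (derivative f).roots := by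
    have h := card_roots_le_derivative f
    rw [hf, roots_multiset_prod_X_sub_C, hs, ← hf] at h
    omega
  have hcard : card (derivative f).roots = m := le_antisymm ((card_roots' _).trans hdeg') hroots
  have hdeg'' : (derivative f).natDegree = m := le_antisymm hdeg' (hcard ▸ card_roots' _)
  refine ⟨(derivative f).roots, hcard, fun j hj => ?_⟩
  have hlead : (derivative f).leadingCoeff = (m : ℝ) + 1 := by
    rw [leadingCoeff, hdeg'', coeff_derivative, ← hdeg, hmonic.coeff_natDegree]
    ring
  have hcoeff_f : (derivative f).coeff (m - j) = (-1) ^ j * s.esymm j * ((m : ℝ) + 1 - j) := by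
    rw [coeff_derivative, show m - j + 1 = m + 1 - j by omega, hf,
      Multiset.prod_X_sub_C_coeff s (by omega), hs, show m + 1 - (m + 1 - j) = j by omega,
      Nat.cast_sub (by omega)]
    ring
  have hcoeff_roots :
      (derivative f).coeff (m - j) = ((m : ℝ) + 1) * (-1) ^ j * (derivative f).roots.esymm j := by
    rw [coeff_eq_esymm_roots_of_card (by rw [hcard, hdeg'']) (by omega), hdeg'', hlead,
      show m - (m - j) = j by omega]
  have hsign : ((-1 : ℝ) ^ j) ^ 2 = 1 := by rw [← pow_mul, mul_comm, pow_mul]; norm_num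
  linear_combination (-1 : ℝ) ^ j * (hcoeff_roots.symm.trans hcoeff_f) -
    (((m : ℝ) + 1) * (derivative f).roots.esymm j - ((m : ℝ) + 1 - j) * s.esymm j) * hsign

theorem Multiset.esymm_mul_esymm_le_sq (s : Multiset ℝ) {i : ℕ} (hi : i + 2 ≤ card s) :
    (i + 2) * (card s - i) * (s.esymm (i + 2) * s.esymm i) ≤
      (i + 1) * (card s - i - 1) * s.esymm (i + 1) ^ 2 := by
  obtain ⟨M, hM⟩ : ∃ M, card s = M := ⟨_, rfl⟩
  rw [hM] at hi ⊢
  induction M, hi using Nat.le_induction generalizing s with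
  | base =>
    classical
    have h := esymmOn_mul_esymmOn_le_sq_of_card_eq (fun a : s => (a : ℝ)) (s := univ)
      (by rw [card_univ, Multiset.card_coe, hM])
    simp only [esymmOn_eq_esymm_map, Multiset.map_univ_coe] at h
    push_cast
    linarith
  | succ m hm ih =>
    obtain ⟨t, ht, hts⟩ := s.exists_esymm_eq_of_derivative hM
    have h0 := hts i (by omega)
    have h1 := hts (i + 1) (by omega)
    have h2 := hts (i + 2) (by omega)
    push_cast at h1 h2 ⊢
    have hpos : 0 < ((m : ℝ) - i) * (m - i - 1) := by
      have : (i : ℝ) + 2 ≤ m := by exact_mod_cast hm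
      nlinarith
    refine le_of_mul_le_mul_left ?_ hpos
    calc ((m : ℝ) - i) * (m - i - 1) * ((i + 2) * (m + 1 - i) * (s.esymm (i + 2) * s.esymm i))
        = (i + 2) * (m - i) * ((((m : ℝ) + 1 - (i + 2)) * s.esymm (i + 2)) *
            (((m : ℝ) + 1 - i) * s.esymm i)) := by ring
      _ = ((m : ℝ) + 1) ^ 2 * ((i + 2) * (m - i) * (t.esymm (i + 2) * t.esymm i)) := by
          rw [← h0, ← h2]; ring
      _ ≤ ((m : ℝ) + 1) ^ 2 * ((i + 1) * (m - i - 1) * t.esymm (i + 1) ^ 2) := by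
          exact mul_le_mul_of_nonneg_left (ih t ht) (by positivity)
      _ = ((m : ℝ) - i) * (m - i - 1) * ((i + 1) * (m + 1 - i - 1) * s.esymm (i + 1) ^ 2) := by
          linear_combination (i + 1) * ((m : ℝ) - i - 1) *
            ((m + 1) * t.esymm (i + 1) + (m + 1 - i - 1) * s.esymm (i + 1)) * h1

theorem esymmOn_mul_esymmOn_le_sq {ι : Type*} (x : ι → ℝ) (s : Finset ι) {i : ℕ}
    (hi : i + 2 ≤ s.card) :
    (i + 2) * (s.card - i) * (esymmOn x (i + 2) s * esymmOn x i s) ≤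
      (i + 1) * (s.card - i - 1) * esymmOn x (i + 1) s ^ 2 := by
  simpa only [esymmOn_eq_esymm_map, Multiset.card_map, card_val] using
    (s.val.map x).esymm_mul_esymm_le_sq (i := i) (by simpa using hi)

section Real

variable {ι : Type*} (x : ι → ℝ)

theorem esymmOn_mul_neg_le_of_pos {s : Finset ι} {a : ℝ} {j : ℕ} (hj : j + 2 ≤ s.card)
    (hE₀ : 0 ≤ esymmOn x j s) (hE₁ : 0 < esymmOn x (j + 1) s)
    (ha : 0 < esymmOn x (j + 2) s + a * esymmOn x (j + 1) s) :
    (j + 2) * (s.card - j) * esymmOn x j s * -a ≤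
      (j + 1) * (s.card - j - 1) * esymmOn x (j + 1) s := by
  have hnewton := esymmOn_mul_esymmOn_le_sq x s hj
  have hm : (j : ℝ) + 2 ≤ s.card := by exact_mod_cast hj
  set m : ℝ := (s.card : ℝ)
  set E₀ := esymmOn x j s
  set E₁ := esymmOn x (j + 1) s
  set E₂ := esymmOn x (j + 2) s
  have hc : 0 ≤ (j + 2) * (m - j) * E₀ := mul_nonneg (by nlinarith) hE₀
  rcases le_or_gt 0 a with ha₀ | ha₀
  · have : 0 ≤ (j + 1) * (m - j - 1) * E₁ := mul_nonneg (by nlinarith) hE₁.le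
    nlinarith [mul_nonneg hc ha₀]
  · refine le_of_mul_le_mul_left ?_ hE₁
    calc E₁ * ((j + 2) * (m - j) * E₀ * -a) = (j + 2) * (m - j) * E₀ * (-a * E₁) := by ring
      _ ≤ (j + 2) * (m - j) * E₀ * E₂ := mul_le_mul_of_nonneg_left (by linarith) hc
      _ ≤ E₁ * ((j + 1) * (m - j - 1) * E₁) := by linarith

variable [DecidableEq ι]

theorem card_sub_mul_esymmOn_erase_le {s : Finset ι} {p : ι} {k : ℕ} (hp : p ∈ s)
    (hmin : ∀ i ∈ s, x p ≤ x i) (hs : ∀ j ≤ k + 1, 0 < esymmOn x j s)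
    (hk : k + 1 < s.card) :
    ((s.card : ℝ) - (k + 1)) * esymmOn x k (s.erase p) ≤
      (k + 1) * ∑ l ∈ s.erase p, esymmOn x k (s.erase l) := by
  rw [sum_erase_eq_sub hp, sum_esymmOn_erase, Nat.cast_sub (by omega)]
  cases k with
  | zero => simp
  | succ j =>
    have hpos := esymmOn_erase_pos_of_forall_le x hp hmin hs
    have hσ := hs (j + 2) le_rfl
    rw [esymmOn_succ_of_mem x hp (j + 1)] at hσ
    have hbound := esymmOn_mul_neg_le_of_pos x (by rw [card_erase_of_mem hp]; omega)
      (hpos j (by omega) (by omega)).le (hpos (j + 1) (by omega) (by omega)) hσ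
    have hcard : (s.card : ℝ) = (s.erase p).card + 1 := by
      rw [card_erase_of_mem hp, Nat.cast_sub (by omega)]
      ring
    rw [esymmOn_succ_of_mem x hp j, hcard]
    push_cast
    linarith

theorem card_sub_mul_sum_sum_esymmOn_erase_le {s : Finset ι} {p : ι} {k : ℕ} (hp : p ∈ s)
    (hmin : ∀ i ∈ s, x p ≤ x i) (hs : ∀ j ≤ k + 1, 0 < esymmOn x j s)
    (hk : k + 1 < s.card) :
    ((s.card : ℝ) - (k + 1)) * ∑ i ∈ s, ∑ l ∈ s.erase i, esymmOn x k (s.erase l) ≤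
      s.card * (s.card - 1) * ∑ l ∈ s.erase p, esymmOn x k (s.erase l) := by
  have key := card_sub_mul_esymmOn_erase_le x hp hmin hs hk
  have hcard : (0 : ℝ) ≤ s.card - 1 := sub_nonneg.2 (by exact_mod_cast (by omega : 1 ≤ s.card))
  rw [sum_sum_erase, ← add_sum_erase s _ hp]
  linarith [mul_le_mul_of_nonneg_left key hcard]

end Real

/-- Key ellipticity lemma for `σ_k`-type operators. -/
theorem stmt_3 (n k : ℕ) (hk1 : 1 ≤ k) (hkn : k ≤ n - 1) :
    ∃ c : ℝ, 0 < c ∧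
      ∀ lam η : Fin n → ℝ,
        (∀ i j : Fin n, i ≤ j → lam j ≤ lam i) →
        (∀ i : Fin n, η i = (∑ j : Fin n, lam j) - lam i) →
        η ∈ GardingCone n k →
        ∀ f : Fin n → ℝ,
          (∀ i : Fin n, f i =
            (1 / (k : ℝ)) * (esym n k η) ^ ((1 : ℝ) / (k : ℝ) - 1) *
              ∑ l ∈ Finset.univ.erase i, esymDel n (k - 1) η l) →
          c * ∑ i : Fin n, f i ≤ f ⟨0, by omega⟩ := by
  obtain ⟨k, rfl⟩ : ∃ k', k = k' + 1 := ⟨k - 1, by omega⟩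
  have hkn' : (k : ℝ) + 1 < n := by exact_mod_cast (by omega : k + 1 < n)
  refine ⟨(n - (k + 1)) / (n * (n - 1)), div_pos (by linarith) (by nlinarith), ?_⟩
  intro lam η hlam hη hΓ f hf
  set C := 1 / ((k + 1 : ℕ) : ℝ) * esym n (k + 1) η ^ ((1 : ℝ) / ((k + 1 : ℕ) : ℝ) - 1)
  have hC : 0 ≤ C :=
    mul_nonneg (by positivity) (Real.rpow_nonneg (hΓ (k + 1) (by omega) le_rfl).le _)
  have hf' : ∀ i, f i = C * ∑ l ∈ univ.erase i, esymmOn η k (univ.erase l) := hf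
  have hmin : ∀ i ∈ univ, η ⟨0, by omega⟩ ≤ η i := fun i _ => by
    rw [hη, hη]
    linarith [hlam ⟨0, by omega⟩ i (Fin.le_iff_val_le_val.2 (Nat.zero_le _))]
  have hΓ' : ∀ j ≤ k + 1, 0 < esymmOn η j univ := fun j hj => by
    rcases j with _ | j
    · simp
    · exact hΓ (j + 1) (by omega) hj
  have key :=
    card_sub_mul_sum_sum_esymmOn_erase_le η (mem_univ _) hmin hΓ' (by rw [card_fin]; omega)
  rw [card_fin] at key
  simp only [hf', ← mul_sum]
  rw [div_mul_eq_mul_div, div_le_iff₀ (by nlinarith)]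
  linarith [mul_le_mul_of_nonneg_left key hC]
end

section
/- Strict ellipticity of the σ_k-type operator: Let 1 ≤ k ≤ n−1 and let λ ∈ ℝⁿ be such that η ∈ Γ_k, where η_i = Σ_{j=1}^n λ_j − λ_i. Define f_i = (1/k) · σ_k(η)^{(1/k)−1} · Σ_{l≠i} σ_{k−1}(η|l). Then Σ_{i=1}^n f_i ≥ ((n−1)/k)·(n−k+1)·C_n^{k−1}/(C_n^k)^{(k−1)/k}. -/
/-!
Summing the `f_i`, each `σ_{k-1}(η|l)` is counted `n - 1` times, and
`∑_l σ_{k-1}(η|l) = (n - k + 1) σ_{k-1}(η)`, so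
`∑ f_i = (n - 1)(n - k + 1)/k · σ_{k-1}(η) / σ_k(η)^{(k-1)/k}`.
The bound is then Maclaurin's inequality `(σ_k/C_n^k)^{(k-1)/k} ≤ σ_{k-1}/C_n^{k-1}` on `Γ_k`,
which follows from Newton's inequalities `E_m E_{m+2} ≤ E_{m+1}^2` for the normalized means
`E_i = σ_i / C_n^i` by a telescoping argument. Newton's inequalities are proved by induction on the
number of variables: the roots of the derivative of `∏ (X - x_i)` are real by Rolle's theorem and
have the same normalized means, and with `m + 2` variables the inequality is Cauchy–Schwarz.
-/

open Finset Polynomial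

namespace Multiset

theorem esymm_cons_succ_s6 {R : Type*} [CommSemiring R] (a : R) (s : Multiset R) (n : ℕ) :
    (a ::ₘ s).esymm (n + 1) = s.esymm (n + 1) + a * s.esymm n := by
  simp [esymm, powersetCard_cons, Multiset.map_map, Multiset.sum_map_mul_left]

theorem two_mul_esymm_two {R : Type*} [CommRing R] (s : Multiset R) :
    2 * s.esymm 2 = s.sum ^ 2 - (s.map (· ^ 2)).sum := by
  induction s using Multiset.induction with
  | empty => simp [esymm, powersetCard_eq_empty 2 (by simp : card (0 : Multiset R) < 2)]
  | cons a s ih =>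
    rw [esymm_cons_succ_s6, mul_add, ih, esymm, powersetCard_one]
    simp only [map_map, Function.comp_apply, prod_singleton, map_id', sum_cons, map_cons]
    ring

theorem le_card_of_esymm_ne_zero {R : Type*} [CommSemiring R] {M : Multiset R} {k : ℕ}
    (h : M.esymm k ≠ 0) : k ≤ card M := by
  by_contra hlt
  exact h (by simp [esymm, powersetCard_eq_empty k (not_le.mp hlt)])

end Multiset

namespace Finset

variable {ι : Type*} [DecidableEq ι]

theorem sum_powersetCard_card_sub {β : Type*} [AddCommMonoid β] (s : Finset ι) {k : ℕ}
    (hk : k ≤ #s) (g : Finset ι → β) :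
    ∑ A ∈ s.powersetCard (#s - k), g A = ∑ B ∈ s.powersetCard k, g (s \ B) := by
  refine sum_nbij' (s \ ·) (s \ ·) (fun A hA => ?_) (fun B hB => ?_) (fun A hA => ?_)
    (fun B hB => ?_) (fun A hA => ?_) <;> simp only [mem_powersetCard] at *
  · exact ⟨sdiff_subset, by rw [card_sdiff_of_subset hA.1, hA.2]; omega⟩
  · exact ⟨sdiff_subset, by rw [card_sdiff_of_subset hB.1, hB.2]⟩
  · exact sdiff_sdiff_eq_self hA.1
  · exact sdiff_sdiff_eq_self hB.1
  · rw [sdiff_sdiff_eq_self hA.1]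

theorem prod_sdiff_pair_mul_prod {R : Type*} [CommMonoid R] {s : Finset ι} (f : ι → R)
    {i j : ι} (hij : i ≠ j) (hi : i ∈ s) (hj : j ∈ s) :
    (∏ l ∈ s \ {i, j}, f l) * ∏ l ∈ s, f l = (∏ l ∈ s.erase i, f l) * ∏ l ∈ s.erase j, f l := by
  have hsdiff : s \ {i, j} = (s.erase i).erase j := by
    ext l
    simp only [mem_sdiff, mem_insert, mem_singleton, mem_erase]
    tauto
  rw [hsdiff, ← mul_prod_erase s f hi, ← mul_prod_erase (s.erase i) f (mem_erase.2 ⟨hij.symm, hj⟩),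
    ← mul_prod_erase (s.erase j) f (mem_erase.2 ⟨hij, hi⟩), erase_right_comm]
  ac_rfl

theorem newton_top (s : Finset ι) (f : ι → ℝ) (hs : 2 ≤ #s) :
    2 * #s * ((s.val.map f).esymm (#s - 2) * (s.val.map f).esymm #s)
      ≤ (#s - 1) * (s.val.map f).esymm (#s - 1) ^ 2 := by
  -- With `P i = ∏_{l ≠ i} f l`, the two sides are `e₂(P)` and `e₁(P)²`.
  set P : ι → ℝ := fun i => ∏ l ∈ s.erase i, f l
  have htop : (s.val.map f).esymm (#s - 1) = ∑ i ∈ s, P i := by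
    rw [esymm_map_val, sum_powersetCard_card_sub s (by omega), powersetCard_one, sum_map]
    simp only [Function.Embedding.coeFn_mk, sdiff_singleton_eq_erase, P]
  have hpairs :
      (s.val.map f).esymm (#s - 2) * (s.val.map f).esymm #s = (s.val.map P).esymm 2 := by
    rw [esymm_map_val, esymm_map_val, esymm_map_val, powersetCard_self, sum_singleton,
      sum_powersetCard_card_sub s hs, sum_mul]
    refine sum_congr rfl fun B hB => ?_
    obtain ⟨hBs, hBcard⟩ := mem_powersetCard.mp hB
    obtain ⟨i, j, hij, rfl⟩ := card_eq_two.mp hBcard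
    rw [prod_sdiff_pair_mul_prod f hij (hBs (by simp)) (hBs (by simp)), prod_pair hij]
  have hsq := (s.val.map P).two_mul_esymm_two
  simp only [Multiset.map_map, Function.comp_def, sum_map_val] at hsq
  have hcs : (∑ i ∈ s, P i) ^ 2 ≤ #s * ∑ i ∈ s, P i ^ 2 := sq_sum_le_card_mul_sum_sq
  rw [htop, hpairs, mul_assoc, mul_left_comm, hsq]
  linarith

theorem sum_sum_erase_univ [Fintype ι] {R : Type*} [CommRing R] (g : ι → R) :
    ∑ i, ∑ l ∈ univ.erase i, g l = (Fintype.card ι - 1) * ∑ l, g l := by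
  simp_rw [sum_erase_eq_sub (mem_univ _)]
  rw [sum_sub_distrib, sum_const, card_univ, nsmul_eq_mul]
  ring

end Finset

theorem Polynomial.card_roots_derivative_eq_natDegree {p : ℝ[X]}
    (hp : Multiset.card p.roots = p.natDegree) :
    Multiset.card (derivative p).roots = (derivative p).natDegree := by
  have := p.card_roots_le_derivative
  have := (derivative p).card_roots'
  have := natDegree_derivative_le p
  omega

namespace Multiset

theorem newton_top (M : Multiset ℝ) (hM : 2 ≤ card M) :
    2 * card M * (M.esymm (card M - 2) * M.esymm (card M))
      ≤ (card M - 1) * M.esymm (card M - 1) ^ 2 := by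
  have h := M.toEnumFinset.newton_top Prod.fst (by rwa [card_toEnumFinset])
  rwa [card_toEnumFinset, map_toEnumFinset_fst] at h

noncomputable def esymmMean (M : Multiset ℝ) (i : ℕ) : ℝ :=
  M.esymm i / (card M).choose i

/-- `T` is the multiset of roots of the derivative of `∏_{r ∈ M} (X - r)`. -/
theorem exists_card_eq_esymmMean_eq (M : Multiset ℝ) {n : ℕ} (hM : card M = n + 1) :
    ∃ T : Multiset ℝ, card T = n ∧ ∀ i ≤ n, T.esymmMean i = M.esymmMean i := by
  set p : ℝ[X] := (M.map (X - C ·)).prod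
  have hcoeff : ∀ i ≤ n, (derivative p).coeff (n - i) = (-1) ^ i * M.esymm i * (n + 1 - i) := by
    intro i hi
    rw [coeff_derivative, prod_X_sub_C_coeff M (by omega), hM,
      show n + 1 - (n - i + 1) = i by omega]
    push_cast [Nat.cast_sub hi]
    ring
  have hlead : (derivative p).coeff n = n + 1 := by simpa [esymm] using hcoeff 0 (Nat.zero_le n)
  have hdeg : (derivative p).natDegree = n := by
    refine natDegree_eq_of_le_of_coeff_ne_zero ?_ (by rw [hlead]; positivity)
    have := natDegree_derivative_le p
    rw [natDegree_multiset_prod_X_sub_C_eq_card, hM] at this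
    omega
  have hroots : card (derivative p).roots = n := by
    rw [card_roots_derivative_eq_natDegree, hdeg]
    rw [natDegree_multiset_prod_X_sub_C_eq_card, roots_multiset_prod_X_sub_C]
  refine ⟨(derivative p).roots, hroots, fun i hi => ?_⟩
  have hvieta := coeff_eq_esymm_roots_of_card (hroots.trans hdeg.symm) (k := n - i) (by omega)
  rw [hcoeff i hi, leadingCoeff, hdeg, hlead, Nat.sub_sub_self hi] at hvieta
  have hchoose : (n.choose i : ℝ) * (n + 1) = (n + 1).choose i * (n + 1 - i) := by
    have := congrArg (Nat.cast (R := ℝ)) (Nat.choose_mul_succ_eq n i)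
    push_cast [Nat.cast_sub (by omega : i ≤ n + 1)] at this
    exact this
  have hpos : ∀ m, i ≤ m → (0 : ℝ) < m.choose i := fun m him => by
    exact_mod_cast Nat.choose_pos him
  rw [esymmMean, esymmMean, hroots, hM,
    div_eq_div_iff (hpos n hi).ne' (hpos (n + 1) (by omega)).ne']
  refine mul_left_cancel₀ (mul_ne_zero (by positivity : (n : ℝ) + 1 ≠ 0)
    (pow_ne_zero i (neg_ne_zero.2 one_ne_zero))) ?_
  linear_combination (-((n + 1).choose i : ℝ)) * hvieta - ((-1) ^ i * M.esymm i) * hchoose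

theorem esymmMean_mul_le_sq_of_card_eq (M : Multiset ℝ) {m : ℕ} (hM : card M = m + 2) :
    M.esymmMean m * M.esymmMean (m + 2) ≤ M.esymmMean (m + 1) ^ 2 := by
  have h := M.newton_top (by omega)
  rw [hM, show m + 2 - 2 = m by omega, show m + 2 - 1 = m + 1 by omega] at h
  have hchoose : ((m + 2).choose m : ℝ) = (m + 2) * (m + 1) / 2 := by
    rw [Nat.choose_symm_add, Nat.cast_choose_two]
    push_cast
    ring
  rw [esymmMean, esymmMean, esymmMean, hM, hchoose, Nat.choose_self, Nat.choose_succ_self_right,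
    div_mul_div_comm, div_pow, div_le_div_iff₀ (by positivity) (by positivity)]
  push_cast at h ⊢
  linear_combination ((m + 2 : ℝ) / 2) * h

theorem esymmMean_mul_le_sq (M : Multiset ℝ) {m : ℕ} (hm : m + 2 ≤ card M) :
    M.esymmMean m * M.esymmMean (m + 2) ≤ M.esymmMean (m + 1) ^ 2 := by
  obtain ⟨n, hn⟩ : ∃ n, card M = m + 2 + n := ⟨card M - (m + 2), by omega⟩
  induction n generalizing M with
  | zero => exact M.esymmMean_mul_le_sq_of_card_eq hn
  | succ n ih =>
    obtain ⟨T, hT, hTM⟩ := M.exists_card_eq_esymmMean_eq (n := m + 2 + n) hn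
    have := ih T (by omega) hT
    rwa [hTM m (by omega), hTM (m + 1) (by omega), hTM (m + 2) (by omega)] at this

end Multiset

theorem pow_succ_le_pow_of_mul_le_sq {p : ℕ → ℝ} {k : ℕ} (h0 : p 0 = 1)
    (hpos : ∀ i ≤ k, 0 < p i) (hlc : ∀ m, m + 2 ≤ k → p m * p (m + 2) ≤ p (m + 1) ^ 2) :
    ∀ m, m + 1 ≤ k → p (m + 1) ^ m ≤ p m ^ (m + 1) := by
  intro m
  induction m with
  | zero => simp [h0]
  | succ m ih =>
    intro hm
    refine le_of_mul_le_mul_right ?_ (pow_pos (hpos (m + 1) (by omega)) m)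
    calc p (m + 2) ^ (m + 1) * p (m + 1) ^ m
        ≤ p (m + 2) ^ (m + 1) * p m ^ (m + 1) :=
          mul_le_mul_of_nonneg_left (ih (by omega)) (pow_nonneg (hpos (m + 2) hm).le _)
      _ = (p m * p (m + 2)) ^ (m + 1) := by ring
      _ ≤ (p (m + 1) ^ 2) ^ (m + 1) :=
          pow_le_pow_left₀ (mul_nonneg (hpos m (by omega)).le (hpos (m + 2) hm).le) (hlc m hm) _
      _ = p (m + 1) ^ (m + 2) * p (m + 1) ^ m := by ring

theorem rpow_le_of_mul_le_sq {p : ℕ → ℝ} {k : ℕ} (hk : 1 ≤ k) (h0 : p 0 = 1)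
    (hpos : ∀ i ≤ k, 0 < p i) (hlc : ∀ m, m + 2 ≤ k → p m * p (m + 2) ≤ p (m + 1) ^ 2) :
    p k ^ (((k : ℝ) - 1) / k) ≤ p (k - 1) := by
  obtain ⟨m, rfl⟩ : ∃ m, k = m + 1 := ⟨k - 1, by omega⟩
  have hpow := pow_succ_le_pow_of_mul_le_sq h0 hpos hlc m le_rfl
  rw [show ((m + 1 : ℕ) : ℝ) - 1 = m by push_cast; ring, div_eq_mul_inv,
    Real.rpow_natCast_mul (hpos _ le_rfl).le, Nat.add_sub_cancel,
    ← Real.pow_rpow_inv_natCast (hpos m (by omega)).le (Nat.succ_ne_zero m)]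
  exact Real.rpow_le_rpow (by have := hpos (m + 1) le_rfl; positivity) hpow (by positivity)

theorem Multiset.esymmMean_rpow_le (M : Multiset ℝ) {k : ℕ} (hk : 1 ≤ k)
    (hpos : ∀ i, 1 ≤ i → i ≤ k → 0 < M.esymm i) :
    M.esymmMean k ^ (((k : ℝ) - 1) / k) ≤ M.esymmMean (k - 1) := by
  have hkM := le_card_of_esymm_ne_zero (hpos k hk le_rfl).ne'
  refine rpow_le_of_mul_le_sq hk (by simp [esymmMean, esymm]) (fun i hi => ?_)
    (fun m hm => M.esymmMean_mul_le_sq (by omega))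
  have hchoose : (0 : ℝ) < (card M).choose i := by exact_mod_cast Nat.choose_pos (by omega)
  rcases Nat.eq_zero_or_pos i with rfl | hi0
  · simp [esymmMean, esymm]
  · exact div_pos (hpos i hi0 hi) hchoose

theorem esym_eq_esymm (n m : ℕ) (x : Fin n → ℝ) : esym n m x = (univ.val.map x).esymm m :=
  (esymm_map_val x univ m).symm

theorem sum_esymDel (n m : ℕ) (x : Fin n → ℝ) :
    ∑ l, esymDel n m x l = ((n - m : ℕ) : ℝ) * esym n m x := by
  have hsets : ∀ l : Fin n, (univ.erase l).powersetCard m = (univ.powersetCard m).filter (l ∉ ·) := by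
    intro l
    ext A
    simp only [mem_powersetCard, subset_erase, mem_filter, subset_univ, true_and]
    tauto
  simp_rw [esymDel, esym, hsets, sum_filter]
  rw [sum_comm, mul_sum]
  refine sum_congr rfl fun A hA => ?_
  rw [← sum_filter, filter_notMem_eq_sdiff, ← compl_eq_univ_sdiff, sum_const, card_compl,
    (mem_powersetCard.mp hA).2, Fintype.card_fin, nsmul_eq_mul]

theorem le_of_mem_gardingCone {n k : ℕ} {x : Fin n → ℝ} (hk : 1 ≤ k)
    (hx : x ∈ GardingCone n k) : k ≤ n := by
  have h := Multiset.le_card_of_esymm_ne_zero (esym_eq_esymm n k x ▸ (hx k hk le_rfl).ne')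
  simpa using h

theorem esym_rpow_le_of_mem_gardingCone {n k : ℕ} {x : Fin n → ℝ} (hk : 1 ≤ k)
    (hx : x ∈ GardingCone n k) :
    (esym n k x / n.choose k) ^ (((k : ℝ) - 1) / k) ≤ esym n (k - 1) x / n.choose (k - 1) := by
  have h := (univ.val.map x).esymmMean_rpow_le hk fun i hi hik => esym_eq_esymm n i x ▸ hx i hi hik
  simpa [Multiset.esymmMean, esym_eq_esymm] using h

theorem stmt_6_general (n k : ℕ) (hk1 : 1 ≤ k)
    (η : Fin n → ℝ)
    (hG : η ∈ GardingCone n k) :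
    ((n : ℝ) - 1) / (k : ℝ) * ((n : ℝ) - (k : ℝ) + 1) * (n.choose (k - 1) : ℝ) /
        ((n.choose k : ℝ) ^ (((k : ℝ) - 1) / (k : ℝ)))
      ≤ ∑ i : Fin n,
          (1 / (k : ℝ)) * (esym n k η) ^ ((1 : ℝ) / (k : ℝ) - 1) *
            ∑ l ∈ Finset.univ.erase i, esymDel n (k - 1) η l := by
  have hkn := le_of_mem_gardingCone hk1 hG
  have hE : 0 < esym n k η := hG k hk1 le_rfl
  have hC : (0 : ℝ) < n.choose k := by exact_mod_cast Nat.choose_pos hkn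
  have hC' : (0 : ℝ) < n.choose (k - 1) := by exact_mod_cast Nat.choose_pos (by omega)
  set e : ℝ := ((k : ℝ) - 1) / k
  have hmaclaurin :
      (n.choose (k - 1) : ℝ) / n.choose k ^ e ≤ esym n (k - 1) η / esym n k η ^ e := by
    have h := esym_rpow_le_of_mem_gardingCone hk1 hG
    rw [Real.div_rpow hE.le hC.le, div_le_div_iff₀ (by positivity) hC'] at h
    rw [div_le_div_iff₀ (by positivity) (by positivity)]
    linarith
  have hcoef : (0 : ℝ) ≤ ((n : ℝ) - 1) / k * (n - k + 1) := by
    have : (1 : ℝ) ≤ k := by exact_mod_cast hk1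
    have : (k : ℝ) ≤ n := by exact_mod_cast hkn
    have : (0 : ℝ) ≤ n - 1 := by linarith
    positivity
  have hexp : (1 : ℝ) / k - 1 = -e := by simp only [e]; field_simp; ring
  calc ((n : ℝ) - 1) / k * (n - k + 1) * n.choose (k - 1) / n.choose k ^ e
      = ((n : ℝ) - 1) / k * (n - k + 1) * (n.choose (k - 1) / n.choose k ^ e) := by ring
    _ ≤ ((n : ℝ) - 1) / k * (n - k + 1) * (esym n (k - 1) η / esym n k η ^ e) :=
      mul_le_mul_of_nonneg_left hmaclaurin hcoef
    _ = _ := by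
      rw [← mul_sum, sum_sum_erase_univ, sum_esymDel, Fintype.card_fin, hexp,
        Real.rpow_neg hE.le, Nat.cast_sub (by omega : k - 1 ≤ n), Nat.cast_sub hk1]
      push_cast
      ring

/-- Strict ellipticity of the `σ_k`-type operator. -/
theorem stmt_6 (n k : ℕ) (hk1 : 1 ≤ k) (hkn : k ≤ n - 1)
    (lam η : Fin n → ℝ)
    (hη : ∀ i : Fin n, η i = (∑ j : Fin n, lam j) - lam i)
    (hG : η ∈ GardingCone n k) :
    ((n : ℝ) - 1) / (k : ℝ) * ((n : ℝ) - (k : ℝ) + 1) * (n.choose (k - 1) : ℝ) /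
        ((n.choose k : ℝ) ^ (((k : ℝ) - 1) / (k : ℝ)))
      ≤ ∑ i : Fin n,
          (1 / (k : ℝ)) * (esym n k η) ^ ((1 : ℝ) / (k : ℝ) - 1) *
            ∑ l ∈ Finset.univ.erase i, esymDel n (k - 1) η l :=
  stmt_6_general n k hk1 η hG
end

section
/- Let 1 ≤ k ≤ n and η ∈ Γ_k. If i and j are indices with η_i ≤ η_j, then σ_{k−1}(η|i) ≥ σ_{k−1}(η|j). In particular, if η_1 ≤ η_2 ≤ ⋯ ≤ η_n then σ_{k−1}(η|1) ≥ σ_{k−1}(η|2) ≥ ⋯ ≥ σ_{k−1}(η|n). -/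
section Aux

open Finset Polynomial

/-- elementary symmetric over an index finset. -/
noncomputable def Esf {I : Type} (S : Finset I) (m : ℕ) (x : I → ℝ) : ℝ :=
  ∑ s ∈ S.powersetCard m, ∏ i ∈ s, x i

lemma Esf_zero {I : Type} (S : Finset I) (x : I → ℝ) : Esf S 0 x = 1 := by
  simp [Esf, Finset.powersetCard_zero]

lemma Esf_eq_zero {I : Type} {S : Finset I} {m : ℕ} (h : S.card < m) (x : I → ℝ) :
    Esf S m x = 0 := by
  simp [Esf, Finset.powersetCard_eq_empty.2 h]

lemma Esf_insert {I : Type} [DecidableEq I] {T : Finset I} {i : I} (hni : i ∉ T)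
    (m : ℕ) (x : I → ℝ) :
    Esf (insert i T) (m + 1) x = Esf T (m + 1) x + x i * Esf T m x := by
  classical
  have hdisj : Disjoint (T.powersetCard (m + 1)) ((T.powersetCard m).image (insert i)) := by
    rw [Finset.disjoint_left]
    intro s hs hs'
    rw [Finset.mem_powersetCard] at hs
    rcases Finset.mem_image.1 hs' with ⟨t, ht, rfl⟩
    exact hni (hs.1 (Finset.mem_insert_self i t))
  have hinj : ∀ s ∈ T.powersetCard m, ∀ t ∈ T.powersetCard m,
      insert i s = insert i t → s = t := by
    intro s hs t ht hst
    rw [Finset.mem_powersetCard] at hs ht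
    have hi1 : i ∉ s := fun h => hni (hs.1 h)
    have hi2 : i ∉ t := fun h => hni (ht.1 h)
    have := congrArg (fun u => Finset.erase u i) hst
    simpa [Finset.erase_insert hi1, Finset.erase_insert hi2] using this
  rw [Esf, Finset.powersetCard_succ_insert hni, Finset.sum_union hdisj,
    Finset.sum_image hinj]
  congr 1
  rw [Esf, Finset.mul_sum]
  refine Finset.sum_congr rfl fun s hs => ?_
  rw [Finset.mem_powersetCard] at hs
  rw [Finset.prod_insert (fun h => hni (hs.1 h))]

lemma Esf_split {I : Type} [DecidableEq I] {S : Finset I} {i : I} (hi : i ∈ S)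
    (m : ℕ) (x : I → ℝ) :
    Esf S (m + 1) x = Esf (S.erase i) (m + 1) x + x i * Esf (S.erase i) m x := by
  classical
  conv_lhs => rw [← Finset.insert_erase hi]
  exact Esf_insert (Finset.notMem_erase _ _) m x

lemma Esf_pos_of_pos {I : Type} {S : Finset I} {m : ℕ} {x : I → ℝ}
    (hx : ∀ j ∈ S, 0 < x j) (hm : m ≤ S.card) : 0 < Esf S m x := by
  have hne : (S.powersetCard m).Nonempty := by
    rw [← Finset.card_pos, Finset.card_powersetCard]
    exact Nat.choose_pos hm
  refine Finset.sum_pos (fun s hs => ?_) hne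
  rw [Finset.mem_powersetCard] at hs
  exact Finset.prod_pos fun j hj => hx j (hs.1 hj)

lemma Esf_coeff {I : Type} (S : Finset I) (x : I → ℝ) {m : ℕ} (hm : m ≤ S.card) :
    (∏ j ∈ S, (X + C (x j))).coeff (S.card - m) = Esf S m x := by
  rw [Finset.prod_X_add_C_coeff S x (Nat.sub_le _ _), Nat.sub_sub_self hm]
  rfl

lemma monic_prodXC {I : Type} (S : Finset I) (x : I → ℝ) :
    (∏ j ∈ S, (X + C (x j))).Monic :=
  monic_prod_of_monic _ _ fun j _ => monic_X_add_C _

lemma natDegree_prodXC {I : Type} (S : Finset I) (x : I → ℝ) :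
    (∏ j ∈ S, (X + C (x j))).natDegree = S.card := by
  rw [Polynomial.natDegree_prod_of_monic _ _ fun j _ => monic_X_add_C _]
  simp [Polynomial.natDegree_X_add_C]

lemma prod_shift {I : Type} (S : Finset I) (x : I → ℝ) (u : ℝ) :
    (∏ j ∈ S, (X + C (x j + u))) = Polynomial.taylor u (∏ j ∈ S, (X + C (x j))) := by
  rw [Polynomial.taylor_apply, Polynomial.prod_comp]
  refine Finset.prod_congr rfl fun j _ => ?_
  simp [Polynomial.add_comp]
  ring

lemma coeff_zero_le_eval (p : ℝ[X]) (hc : ∀ j, 0 ≤ p.coeff j) {u : ℝ} (hu : 0 ≤ u) :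
    p.coeff 0 ≤ p.eval u := by
  rw [Polynomial.eval_eq_sum_range]
  have h0 : p.coeff 0 = p.coeff 0 * u ^ 0 := by simp
  rw [h0]
  exact Finset.single_le_sum (f := fun j => p.coeff j * u ^ j)
    (fun j _ => mul_nonneg (hc j) (pow_nonneg hu j)) (Finset.mem_range.2 (Nat.succ_pos _))

lemma Esf_shift_pos {I : Type} {S : Finset I} {x : I → ℝ} {m : ℕ}
    (hpos : ∀ c, c ≤ m → 0 < Esf S c x) (hm : m ≤ S.card) {u : ℝ} (hu : 0 ≤ u) :
    0 < Esf S m (fun j => x j + u) := by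
  have key : Esf S m (fun j => x j + u)
      = (Polynomial.hasseDeriv (S.card - m) (∏ j ∈ S, (X + C (x j)))).eval u := by
    rw [← Esf_coeff S (fun j => x j + u) hm, prod_shift, Polynomial.taylor_coeff]
  rw [key]
  set P := ∏ j ∈ S, (X + C (x j)) with hP
  set d := S.card - m with hd
  have hcoeff : ∀ j, 0 ≤ (Polynomial.hasseDeriv d P).coeff j := by
    intro j
    rw [Polynomial.hasseDeriv_coeff]
    by_cases hj : j + d ≤ S.card
    · have h1 : S.card - (S.card - (j + d)) = j + d := Nat.sub_sub_self hj
      have h2 : S.card - (j + d) ≤ m := by omega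
      have := hpos (S.card - (j + d)) h2
      rw [← Esf_coeff S x (Nat.sub_le _ _), h1] at this
      positivity
    · rw [Polynomial.coeff_eq_zero_of_natDegree_lt]
      · simp
      · rw [natDegree_prodXC]; omega
  have h0 : 0 < (Polynomial.hasseDeriv d P).coeff 0 := by
    rw [Polynomial.hasseDeriv_coeff]
    have h1 : (0 + d).choose d = 1 := by simp
    have h2 : (0 : ℕ) + d = S.card - m := by omega
    rw [h1, h2, Esf_coeff S x hm]
    simpa using hpos m le_rfl
  calc (0:ℝ) < _ := h0
    _ ≤ _ := coeff_zero_le_eval _ hcoeff hu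

lemma multiset_prod_pos' {s : Multiset ℝ} (h : ∀ a ∈ s, 0 < a) : 0 < s.prod := by
  induction s using Multiset.induction with
  | empty => simp
  | cons a s ih =>
      rw [Multiset.prod_cons]
      exact mul_pos (h a (Multiset.mem_cons_self a s))
        (ih fun b hb => h b (Multiset.mem_cons_of_mem hb))

lemma multiset_sum_pos' {s : Multiset ℝ} (h : ∀ a ∈ s, 0 < a) (hne : s ≠ 0) : 0 < s.sum := by
  induction s using Multiset.induction with
  | empty => simp at hne
  | cons a s ih =>
      rw [Multiset.sum_cons]
      have ha := h a (Multiset.mem_cons_self a s)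
      have hs : 0 ≤ s.sum :=
        Multiset.sum_nonneg fun b hb => (h b (Multiset.mem_cons_of_mem hb)).le
      linarith

lemma esymm_pos {s : Multiset ℝ} (hs : ∀ r ∈ s, 0 < r) {c : ℕ} (hc : c ≤ Multiset.card s) :
    0 < s.esymm c := by
  rw [Multiset.esymm]
  refine multiset_sum_pos' ?_ ?_
  · intro a ha
    rcases Multiset.mem_map.1 ha with ⟨t, ht, rfl⟩
    rcases Multiset.mem_powersetCard.1 ht with ⟨hts, _⟩
    exact multiset_prod_pos' fun b hb => hs b (Multiset.mem_of_le hts hb)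
  · intro h
    have := congrArg Multiset.card h
    rw [Multiset.card_map, Multiset.card_powersetCard] at this
    simp only [Multiset.card_zero] at this
    exact absurd this (Nat.choose_pos hc).ne'

lemma realrooted_iterate (d : ℕ) (p : ℝ[X]) (hp : Multiset.card p.roots = p.natDegree) :
    Multiset.card (derivative^[d] p).roots = (derivative^[d] p).natDegree ∧
    (derivative^[d] p).natDegree = p.natDegree - d := by
  induction d with
  | zero => simpa using hp
  | succ d ih =>
      obtain ⟨h1, h2⟩ := ih
      set q := derivative^[d] p with hq
      rw [Function.iterate_succ_apply', ← hq]
      rcases Nat.eq_zero_or_pos q.natDegree with h0 | hpos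
      · have : derivative q = 0 := by
          have := Polynomial.eq_C_of_natDegree_eq_zero h0
          rw [this]; simp
        rw [this]
        constructor
        · simp [Polynomial.roots_zero]
        · simp; omega
      · have ha := Polynomial.card_roots_le_derivative q
        have hb := Polynomial.card_roots' (derivative q)
        have hc := Polynomial.natDegree_derivative_le q
        constructor <;> omega

lemma NV {I : Type} [DecidableEq I] {S : Finset I} {x : I → ℝ} {k : ℕ} (hk : 2 ≤ k)
    (hkS : k ≤ S.card) {i : I} (hi : i ∈ S)
    (hG : ∀ m, 1 ≤ m → m ≤ k → 0 < Esf S m x)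
    (hIH : ∀ c, c ≤ k - 2 → 0 < Esf (S.erase i) c x) :
    Esf (S.erase i) (k - 1) x ≠ 0 := by
  intro h0
  set T := S.erase i with hT
  have hTcard : T.card = S.card - 1 := Finset.card_erase_of_mem hi
  have hsplit : Esf S k x = Esf T k x + x i * Esf T (k - 1) x := by
    have h := Esf_split hi (k - 1) x
    rwa [Nat.sub_add_cancel (by omega)] at h
  have hSk : 0 < Esf S k x := hG k (by omega) le_rfl
  by_cases hcase : S.card = k
  · have hz : Esf T k x = 0 := Esf_eq_zero (by omega) x
    rw [hsplit, hz, h0] at hSk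
    simp at hSk
  · have hkN : k ≤ T.card := by omega
    have hTk : 0 < Esf T k x := by
      have : Esf T k x = Esf S k x := by rw [hsplit, h0]; ring
      rw [this]; exact hSk
    set P := ∏ j ∈ T, (X + C (x j)) with hPdef
    set d := T.card - k with hd
    have hPdeg : P.natDegree = T.card := natDegree_prodXC T x
    have hPne : P ≠ 0 := (monic_prodXC T x).ne_zero
    have hProots : Multiset.card P.roots = P.natDegree := by
      rw [hPdeg, hPdef, Polynomial.roots_prod _ _ hPne, Multiset.card_bind]
      have hone : ∀ j ∈ T.val, Multiset.card (X + C (x j)).roots = 1 := by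
        intro j _
        have hxe : (X + C (x j)) = X - C (-(x j)) := by
          rw [map_neg, sub_neg_eq_add]
        rw [hxe, Polynomial.roots_X_sub_C]
        rfl
      simp only [Function.comp_def]
      rw [Multiset.map_congr rfl hone]
      simp [Multiset.map_const', Multiset.sum_replicate]
    set f := derivative^[d] P with hf
    obtain ⟨hfroots, hfdeg⟩ := realrooted_iterate d P hProots
    rw [← hf] at hfroots hfdeg
    have hfdeg' : f.natDegree = k := by rw [hfdeg, hPdeg]; omega
    -- coefficients of f
    have hfc : ∀ j, f.coeff j
        = ((Nat.factorial d : ℕ) : ℝ) * (((j + d).choose d : ℕ) : ℝ) * P.coeff (j + d) := by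
      intro j
      have hiter : derivative^[d] P = Nat.factorial d • Polynomial.hasseDeriv d P := by
        rw [← Polynomial.factorial_smul_hasseDeriv]
        rfl
      rw [hf, hiter, Polynomial.coeff_smul, Polynomial.hasseDeriv_coeff, nsmul_eq_mul]
      push_cast
      ring
    have hcoeffval : ∀ j, j ≤ k → P.coeff (j + d) = Esf T (k - j) x := by
      intro j hj
      have h1 : T.card - (k - j) = j + d := by omega
      rw [← Esf_coeff T x (show k - j ≤ T.card by omega), h1]
    have hfc_nonneg : ∀ j, 0 ≤ f.coeff j := by
      intro j
      rw [hfc j]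
      by_cases hj : j ≤ k
      · rw [hcoeffval j hj]
        have hE : 0 ≤ Esf T (k - j) x := by
          rcases Nat.lt_or_ge j 1 with h | h
          · have : j = 0 := by omega
            subst this
            simpa using hTk.le
          · rcases Nat.lt_or_ge j 2 with h2 | h2
            · have : j = 1 := by omega
              subst this
              rw [h0]
            · exact (hIH (k - j) (by omega)).le
        positivity
      · rw [Polynomial.coeff_eq_zero_of_natDegree_lt (by rw [hPdeg]; omega)]
        simp
    have hfc0 : 0 < f.coeff 0 := by
      rw [hfc 0, hcoeffval 0 (by omega)]
      have h1 : 0 < ((Nat.factorial d : ℕ) : ℝ) := by positivity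
      have h2 : (0:ℝ) < (((0 + d).choose d : ℕ) : ℝ) := by simp
      simpa using mul_pos (mul_pos h1 h2) hTk
    have hfc1 : f.coeff 1 = 0 := by
      rw [hfc 1, hcoeffval 1 (by omega), h0, mul_zero]
    have hfne : f ≠ 0 := fun h => by rw [h] at hfc0; simp at hfc0
    -- all roots of f are negative
    have hroots_neg : ∀ r ∈ f.roots, r < 0 := by
      intro r hr
      by_contra hge
      push_neg at hge
      have heval : f.eval r = 0 := (Polynomial.mem_roots'.1 hr).2
      have := coeff_zero_le_eval f hfc_nonneg hge
      rw [heval] at this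
      linarith
    -- leading coefficient positive
    have hlc : 0 < f.leadingCoeff := by
      rw [Polynomial.leadingCoeff, hfdeg', hfc k]
      have hkd : k + d = T.card := by omega
      rw [hcoeffval k le_rfl]
      simp only [Nat.sub_self, Esf_zero]
      have h1 : 0 < ((Nat.factorial d : ℕ) : ℝ) := by positivity
      have h2 : 0 < (((k + d).choose d : ℕ) : ℝ) := by
        have := Nat.choose_pos (show d ≤ k + d by omega)
        exact_mod_cast this
      simpa using mul_pos h1 h2
    -- factorization and coefficient 1
    have hfact := Polynomial.C_leadingCoeff_mul_prod_multiset_X_sub_C hfroots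
    set s : Multiset ℝ := f.roots.map (fun r => -r) with hs
    have hscard : Multiset.card s = k := by
      rw [hs, Multiset.card_map, hfroots, hfdeg']
    have hspos : ∀ a ∈ s, 0 < a := by
      intro a ha
      rcases Multiset.mem_map.1 ha with ⟨r, hr, rfl⟩
      simpa using hroots_neg r hr
    have hmap : f.roots.map (fun a => X - Polynomial.C a)
        = s.map (fun b => X + Polynomial.C b) := by
      rw [hs, Multiset.map_map]
      refine Multiset.map_congr rfl fun r _ => ?_
      simp [sub_eq_add_neg]
    have hcoeff1 : f.coeff 1 = f.leadingCoeff * s.esymm (k - 1) := by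
      conv_lhs => rw [← hfact]
      rw [Polynomial.coeff_C_mul, hmap, Multiset.prod_X_add_C_coeff s (by omega), hscard]
    have : 0 < f.leadingCoeff * s.esymm (k - 1) :=
      mul_pos hlc (esymm_pos hspos (by omega))
    rw [← hcoeff1, hfc1] at this
    exact lt_irrefl _ this

lemma core : ∀ k : ℕ, ∀ {I : Type} [inst : DecidableEq I] (S : Finset I) (x : I → ℝ),
    k + 1 ≤ S.card → (∀ m, 1 ≤ m → m ≤ k + 1 → 0 < Esf S m x) →
    ∀ i ∈ S, 0 < Esf (S.erase i) k x := by
  intro k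
  induction k using Nat.strong_induction_on with
  | _ k IH =>
    intro I inst S x hcard hG i hi
    rcases Nat.eq_zero_or_pos k with rfl | hkpos
    · rw [Esf_zero]; norm_num
    set T := S.erase i with hT
    have hTcard : T.card = S.card - 1 := Finset.card_erase_of_mem hi
    have hGam : ∀ u : ℝ, 0 ≤ u → ∀ m, 1 ≤ m → m ≤ k + 1 →
        0 < Esf S m (fun j => x j + u) := by
      intro u hu m h1 h2
      refine Esf_shift_pos (fun c hc => ?_) (by omega) hu
      rcases Nat.eq_zero_or_pos c with rfl | hc1
      · rw [Esf_zero]; norm_num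
      · exact hG c hc1 (by omega)
    have hNV : ∀ u : ℝ, 0 ≤ u → Esf T k (fun j => x j + u) ≠ 0 := by
      intro u hu
      have hres : ∀ c, c ≤ (k + 1) - 2 → 0 < Esf T c (fun j => x j + u) := by
        intro c hc
        rcases Nat.eq_zero_or_pos c with rfl | hc1
        · rw [Esf_zero]; norm_num
        · exact IH c (by omega) S (fun j => x j + u) (by omega)
            (fun m hm1 hm2 => hGam u hu m hm1 (by omega)) i hi
      have := NV (S := S) (x := fun j => x j + u) (k := k + 1) (by omega) (by omega) hi
        (fun m hm1 hm2 => hGam u hu m hm1 hm2) hres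
      simpa using this
    have hcont : Continuous (fun u : ℝ => Esf T k (fun j => x j + u)) := by
      unfold Esf
      exact continuous_finset_sum _ fun s _ =>
        continuous_finset_prod _ fun j _ => continuous_const.add continuous_id
    set U : ℝ := 1 + ∑ j ∈ S, |x j| with hU
    have hU0 : 0 ≤ U := by
      have : 0 ≤ ∑ j ∈ S, |x j| := Finset.sum_nonneg fun l _ => abs_nonneg (x l)
      rw [hU]; linarith
    have hposU : ∀ j ∈ T, 0 < x j + U := by
      intro j hj
      have hjS : j ∈ S := Finset.mem_of_mem_erase hj
      have h1 : |x j| ≤ ∑ l ∈ S, |x l| :=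
        Finset.single_le_sum (fun l _ => abs_nonneg (x l)) hjS
      have h2 := neg_abs_le (x j)
      rw [hU]; linarith
    have hgU : 0 < Esf T k (fun j => x j + U) := Esf_pos_of_pos hposU (by omega)
    have hx0 : (fun j => x j + (0:ℝ)) = x := by funext j; ring
    have hg0ne : Esf T k x ≠ 0 := by
      have := hNV 0 le_rfl
      rwa [hx0] at this
    by_contra hle
    push_neg at hle
    have hlt : Esf T k x < 0 := lt_of_le_of_ne hle hg0ne
    have hIVT := intermediate_value_Icc hU0 hcont.continuousOn
    have h0mem : (0:ℝ) ∈ Set.Icc (Esf T k (fun j => x j + 0)) (Esf T k (fun j => x j + U)) := by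
      rw [hx0]; exact ⟨hlt.le, hgU.le⟩
    rcases hIVT h0mem with ⟨u, hu, hgu⟩
    exact hNV u hu.1 hgu


end Aux

theorem stmt_9 (n k : ℕ) (hk1 : 1 ≤ k) (hkn : k ≤ n)
    (η : Fin n → ℝ) (hη : η ∈ GardingCone n k)
    (i j : Fin n) (hij : η i ≤ η j) :
    esymDel n (k - 1) η j ≤ esymDel n (k - 1) η i := by
  classical
  by_cases hij' : i = j
  · subst hij'; exact le_rfl
  have hcardu : (Finset.univ : Finset (Fin n)).card = n := by simp
  have hG : ∀ m, 1 ≤ m → m ≤ k → 0 < Esf Finset.univ m η := fun m h1 h2 => hη m h1 h2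
  rcases Nat.lt_or_ge k 2 with hk2 | hk2
  · have hk1' : k = 1 := by omega
    subst hk1'
    have e1 : esymDel n (1 - 1) η j = Esf (Finset.univ.erase j) 0 η := rfl
    have e2 : esymDel n (1 - 1) η i = Esf (Finset.univ.erase i) 0 η := rfl
    rw [e1, e2, Esf_zero, Esf_zero]
  · obtain ⟨K, rfl⟩ : ∃ K, k = K + 2 := ⟨k - 2, by omega⟩
    have hi' : j ∈ Finset.univ.erase i :=
      Finset.mem_erase.2 ⟨fun h => hij' h.symm, Finset.mem_univ j⟩
    have hj' : i ∈ Finset.univ.erase j := Finset.mem_erase.2 ⟨hij', Finset.mem_univ i⟩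
    have hsplit1 : Esf (Finset.univ.erase i) (K + 1) η
        = Esf ((Finset.univ.erase i).erase j) (K + 1) η
          + η j * Esf ((Finset.univ.erase i).erase j) K η :=
      Esf_split hi' K η
    have hsplit2 : Esf (Finset.univ.erase j) (K + 1) η
        = Esf ((Finset.univ.erase j).erase i) (K + 1) η
          + η i * Esf ((Finset.univ.erase j).erase i) K η :=
      Esf_split hj' K η
    have hcomm : (Finset.univ.erase j).erase i = (Finset.univ.erase i).erase j :=
      Finset.erase_right_comm
    have hpos : 0 < Esf ((Finset.univ.erase i).erase j) K η := by
      rcases Nat.eq_zero_or_pos K with rfl | hK1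
      · rw [Esf_zero]; norm_num
      · have hGi : ∀ m, 1 ≤ m → m ≤ K + 1 → 0 < Esf (Finset.univ.erase i) m η := by
          intro m h1 h2
          exact core m Finset.univ η (by rw [hcardu]; omega)
            (fun m' h1' h2' => hG m' h1' (by omega)) i (Finset.mem_univ i)
        refine core K (Finset.univ.erase i) η ?_ hGi j hi'
        rw [Finset.card_erase_of_mem (Finset.mem_univ i), hcardu]; omega
    have key : esymDel n (K + 2 - 1) η i - esymDel n (K + 2 - 1) η j
        = (η j - η i) * Esf ((Finset.univ.erase i).erase j) K η := by
      have e1 : esymDel n (K + 2 - 1) η i = Esf (Finset.univ.erase i) (K + 1) η := rfl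
      have e2 : esymDel n (K + 2 - 1) η j = Esf (Finset.univ.erase j) (K + 1) η := rfl
      rw [e1, e2, hsplit1, hsplit2, hcomm]
      ring
    nlinarith [mul_nonneg (sub_nonneg.2 hij) hpos.le]
end

section
/- Let 1 ≤ k ≤ n and λ ∈ Γ_k. Then σ_{k−1}(λ|i) > 0 for every index i, i.e., the (k−1)-th elementary symmetric function of the vector obtained from λ by deleting any single entry is strictly positive. -/
open Polynomial

private lemma deriv_real_rooted (p : ℝ[X]) (h : Multiset.card p.roots = p.natDegree) :
    Multiset.card (derivative p).roots = (derivative p).natDegree ∧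
      (derivative p).natDegree = p.natDegree - 1 := by
  have h1 := p.card_roots_le_derivative
  have h2 := (derivative p).card_roots'
  have h3 := p.natDegree_derivative_le
  omega

private lemma iterate_facts (p : ℝ[X]) (h : Multiset.card p.roots = p.natDegree)
    (hl : 0 < p.leadingCoeff) :
    ∀ j : ℕ, j ≤ p.natDegree →
      Multiset.card (derivative^[j] p).roots = (derivative^[j] p).natDegree ∧
      (derivative^[j] p).natDegree = p.natDegree - j ∧ 0 < (derivative^[j] p).leadingCoeff := by
  intro j
  induction j with
  | zero => intro _; simpa using ⟨h, hl⟩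
  | succ j ih =>
    intro hj
    obtain ⟨h1, h2, h3⟩ := ih (by omega)
    rw [Function.iterate_succ_apply']
    obtain ⟨g1, g2⟩ := deriv_real_rooted _ h1
    refine ⟨g1, by omega, ?_⟩
    have hdeg : 1 ≤ (derivative^[j] p).natDegree := by omega
    have e : (derivative^[j] p).natDegree - 1 + 1 = (derivative^[j] p).natDegree := by omega
    have e2 : (((derivative^[j] p).natDegree - 1 : ℕ) : ℝ) + 1
        = ((derivative^[j] p).natDegree : ℝ) := by exact_mod_cast congrArg (Nat.cast (R := ℝ)) e
    have hco : (derivative (derivative^[j] p)).leadingCoeff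
        = (derivative^[j] p).leadingCoeff * ((derivative^[j] p).natDegree : ℝ) :=
      calc (derivative (derivative^[j] p)).leadingCoeff
          = (derivative (derivative^[j] p)).coeff ((derivative^[j] p).natDegree - 1) := by
            rw [← g2, coeff_natDegree]
        _ = (derivative^[j] p).leadingCoeff * ((derivative^[j] p).natDegree : ℝ) := by
            rw [coeff_derivative, e, e2, coeff_natDegree]
    rw [hco]
    have : (0:ℝ) < ((derivative^[j] p).natDegree : ℝ) := by exact_mod_cast hdeg
    positivity

private lemma eval_pos_of_roots_lt (p : ℝ[X]) (h : Multiset.card p.roots = p.natDegree)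
    (hl : 0 < p.leadingCoeff) {t : ℝ} (ht : ∀ r ∈ p.roots, r < t) : 0 < p.eval t := by
  conv_rhs => rw [← C_leadingCoeff_mul_prod_multiset_X_sub_C h]
  rw [eval_mul, eval_C, eval_multiset_prod, Multiset.map_map]
  apply mul_pos hl
  apply Multiset.prod_pos
  intro x hx
  obtain ⟨r, hr, rfl⟩ := Multiset.mem_map.1 hx
  simp only [Function.comp_apply, eval_sub, eval_X, eval_C]
  linarith [ht r hr]

private lemma aux_deriv_prod_pos (s : Multiset ℝ) {t : ℝ} (ht : ∀ r ∈ s, r < t) :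
    0 ≤ (derivative (s.map (fun a => X - C a)).prod).eval t ∧
    (s ≠ 0 → 0 < (derivative (s.map (fun a => X - C a)).prod).eval t) := by
  induction s using Multiset.induction_on with
  | empty => simp
  | cons a s ih =>
    have hprodpos : 0 < ((s.map (fun a => X - C a)).prod).eval t := by
      rw [eval_multiset_prod, Multiset.map_map]
      apply Multiset.prod_pos
      intro x hx
      obtain ⟨r, hr, rfl⟩ := Multiset.mem_map.1 hx
      simp only [Function.comp_apply, eval_sub, eval_X, eval_C]
      linarith [ht r (Multiset.mem_cons_of_mem hr)]
    have hta : a < t := ht a (Multiset.mem_cons_self a s)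
    have ihs := ih (fun r hr => ht r (Multiset.mem_cons_of_mem hr))
    rw [Multiset.map_cons, Multiset.prod_cons, derivative_mul, derivative_X_sub_C, one_mul,
      eval_add, eval_mul, eval_sub, eval_X, eval_C]
    constructor
    · have := ihs.1; nlinarith
    · intro _; have := ihs.1; nlinarith

private lemma derivative_eval_pos_of_roots_lt (p : ℝ[X])
    (h : Multiset.card p.roots = p.natDegree) (hd : 1 ≤ p.natDegree)
    (hl : 0 < p.leadingCoeff) {t : ℝ} (ht : ∀ r ∈ p.roots, r < t) :
    0 < (derivative p).eval t := by
  conv_rhs => rw [← C_leadingCoeff_mul_prod_multiset_X_sub_C h]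
  rw [derivative_C_mul, eval_mul, eval_C]
  apply mul_pos hl
  refine (aux_deriv_prod_pos p.roots ht).2 ?_
  intro h0
  rw [h0] at h
  simp at h
  omega

private lemma iter_deriv_mul_linear (Q : ℝ[X]) (a : ℝ) :
    ∀ j : ℕ, derivative^[j+1] ((X + C a) * Q) =
      (X + C a) * derivative^[j+1] Q + C ((j : ℝ) + 1) * derivative^[j] Q := by
  intro j
  induction j with
  | zero =>
    simp only [Nat.cast_zero, zero_add, Function.iterate_one, Function.iterate_zero, id_eq,
      derivative_mul, derivative_X_add_C, one_mul, map_one, C_1]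
    ring
  | succ j ih =>
    have hC : (C ((((j:ℕ)+1 : ℕ) : ℝ) + 1) : ℝ[X]) = C ((j:ℝ)+1) + 1 := by
      push_cast
      rw [map_add, C_1]
    rw [Function.iterate_succ_apply', ih, derivative_add, derivative_mul, derivative_mul,
      derivative_X_add_C, derivative_C, one_mul, zero_mul, zero_add,
      ← Function.iterate_succ_apply' derivative (j+1),
      ← Function.iterate_succ_apply' derivative j, hC]
    ring

theorem stmt_10 (n k : ℕ) (hk1 : 1 ≤ k) (hkn : k ≤ n)
    (lam : Fin n → ℝ) (hlam : lam ∈ GardingCone n k) :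
    ∀ i : Fin n, 0 < esymDel n (k - 1) lam i := by
  intro i
  rcases eq_or_lt_of_le hk1 with hk1' | hk2
  · -- k = 1 : the claim is that the empty elementary symmetric function is 1 > 0
    rw [← hk1']
    simp [esymDel]
  -- from now on 2 ≤ k
  set P : ℝ[X] := ∏ j : Fin n, (X + C (lam j)) with hP
  have hPdeg : P.natDegree = n := by
    rw [hP, Polynomial.natDegree_prod _ _ (fun j _ => X_add_C_ne_zero (lam j))]
    simp [natDegree_X_add_C]
  have hPcoeff : ∀ c : ℕ, c ≤ n → n - c ≤ k → 0 < P.coeff c := by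
    intro c hc hkc
    have h1 : P.coeff c = ∑ t ∈ Finset.univ.powersetCard (n - c), ∏ j ∈ t, lam j := by
      rw [hP, Finset.prod_X_add_C_coeff Finset.univ lam
        (by simpa using hc)]
      congr 2
      simp
    rw [h1]
    rcases Nat.eq_zero_or_pos (n - c) with h0 | h0
    · rw [h0]
      simp
    · exact hlam (n - c) h0 hkc
  set m : ℕ := n - k with hm
  have hFpos : ∀ t : ℝ, 0 ≤ t → 0 < (derivative^[m] P).eval t := by
    intro t ht
    rw [eval_eq_sum_range]
    apply Finset.sum_pos'
    · intro r _
      rw [coeff_iterate_derivative, nsmul_eq_mul]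
      rcases le_or_gt (r + m) n with h | h
      · have h2 := hPcoeff (r + m) h (by omega)
        positivity
      · rw [coeff_eq_zero_of_natDegree_lt (by omega)]
        simp
    · refine ⟨0, Finset.mem_range.2 (by omega), ?_⟩
      rw [coeff_iterate_derivative, nsmul_eq_mul, pow_zero, mul_one, zero_add]
      have h0 : 0 < P.coeff m := hPcoeff m (by omega) (by omega)
      have h1 : 0 < ((m.descFactorial m : ℕ) : ℝ) := by
        rw [Nat.descFactorial_self]
        exact_mod_cast Nat.factorial_pos m
      positivity
  rcases eq_or_lt_of_le hkn with hnk | hnk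
  · -- case n = k : all entries are positive
    have hm0 : m = 0 := by omega
    have hpos : ∀ j, 0 < lam j := by
      intro j
      by_contra hcon
      push_neg at hcon
      have h0 : P.eval (-lam j) = 0 := by
        rw [hP, eval_prod]
        apply Finset.prod_eq_zero (Finset.mem_univ j)
        simp
      have h1 := hFpos (-lam j) (by linarith)
      rw [hm0, Function.iterate_zero, id_eq, h0] at h1
      exact lt_irrefl 0 h1
    unfold esymDel
    apply Finset.sum_pos
    · intro t _
      exact Finset.prod_pos (fun j _ => hpos j)
    · apply Finset.powersetCard_nonempty.2
      rw [Finset.card_erase_of_mem (Finset.mem_univ i), Finset.card_univ, Fintype.card_fin]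
      omega
  · -- main case k < n
    have hm1 : 1 ≤ m := by omega
    set s : Finset (Fin n) := Finset.univ.erase i with hs
    have hscard : s.card = n - 1 := by
      rw [hs, Finset.card_erase_of_mem (Finset.mem_univ i), Finset.card_univ, Fintype.card_fin]
    set Q : ℝ[X] := ∏ j ∈ s, (X + C (lam j)) with hQ
    set M : Multiset ℝ := s.val.map (fun j => -lam j) with hM
    have hMcard : Multiset.card M = n - 1 := by
      rw [hM, Multiset.card_map]
      exact hscard
    have hQM : Q = (M.map (fun a => X - C a)).prod := by
      rw [hQ, Finset.prod_eq_multiset_prod, hM, Multiset.map_map]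
      congr 1
      apply Multiset.map_congr rfl
      intro j _
      simp [sub_neg_eq_add]
    have hQroots : Q.roots = M := by rw [hQM, roots_multiset_prod_X_sub_C]
    have hQdeg : Q.natDegree = n - 1 := by
      rw [hQM, natDegree_multiset_prod_X_sub_C_eq_card, hMcard]
    have hQlead : 0 < Q.leadingCoeff := by
      have hQmonic : Q.Monic := by
        rw [hQM]
        exact monic_multiset_prod_of_monic _ _ (fun a _ => monic_X_sub_C a)
      rw [hQmonic.leadingCoeff]
      norm_num
    have hQrr : Multiset.card Q.roots = Q.natDegree := by rw [hQroots, hQdeg, hMcard]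
    obtain ⟨m', hm'⟩ : ∃ m', m = m' + 1 := ⟨m - 1, by omega⟩
    set q : ℝ[X] := derivative^[m'] Q with hq
    set G : ℝ[X] := derivative^[m] Q with hG
    have hGq : G = derivative q := by rw [hG, hq, hm', Function.iterate_succ_apply']
    obtain ⟨hq1, hq2, hq3⟩ := iterate_facts Q hQrr hQlead m' (by omega)
    obtain ⟨hG1, hG2, hG3⟩ := iterate_facts Q hQrr hQlead m (by omega)
    rw [← hq] at hq1 hq2 hq3
    rw [← hG] at hG1 hG2 hG3
    have hqdeg : q.natDegree = k := by rw [hq2, hQdeg]; omega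
    have hGdeg : G.natDegree = k - 1 := by rw [hG2, hQdeg]; omega
    -- gamma, the largest root of q
    have hqfinne : q.roots.toFinset.Nonempty := by
      rw [Multiset.toFinset_nonempty]
      intro hcon
      rw [hcon] at hq1
      simp [hqdeg] at hq1
      omega
    set γ : ℝ := q.roots.toFinset.max' hqfinne with hγ
    have hγmem : γ ∈ q.roots := Multiset.mem_toFinset.1 (q.roots.toFinset.max'_mem hqfinne)
    have hγub : ∀ r ∈ q.roots, r ≤ γ := fun r hr =>
      Finset.le_max' _ r (Multiset.mem_toFinset.2 hr)
    have hqγ : q.eval γ = 0 := isRoot_of_mem_roots hγmem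
    have hGposγ : ∀ t : ℝ, γ < t → 0 < G.eval t := by
      intro t htt
      rw [hGq]
      exact derivative_eval_pos_of_roots_lt q hq1 (by omega) hq3
        (fun r hr => lt_of_le_of_lt (hγub r hr) htt)
    have hGrootsle : ∀ r ∈ G.roots, r ≤ γ := by
      intro r hr
      by_contra hcon
      push_neg at hcon
      have h1 := hGposγ r hcon
      have h0 : G.eval r = 0 := isRoot_of_mem_roots hr
      linarith
    -- beta, the largest root of G
    have hGfinne : G.roots.toFinset.Nonempty := by
      rw [Multiset.toFinset_nonempty]
      intro hcon
      rw [hcon] at hG1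
      simp [hGdeg] at hG1
      omega
    set β : ℝ := G.roots.toFinset.max' hGfinne with hβ
    have hβmem : β ∈ G.roots := Multiset.mem_toFinset.1 (G.roots.toFinset.max'_mem hGfinne)
    have hβub : ∀ r ∈ G.roots, r ≤ β := fun r hr =>
      Finset.le_max' _ r (Multiset.mem_toFinset.2 hr)
    have hβγ : β ≤ γ := hGrootsle β hβmem
    have hGβ : G.eval β = 0 := isRoot_of_mem_roots hβmem
    -- q(β) ≤ 0
    have hqβ : q.eval β ≤ 0 := by
      have hmono : MonotoneOn (fun x => q.eval x) (Set.Icc β γ) := by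
        apply monotoneOn_of_deriv_nonneg (convex_Icc β γ)
        · exact (Polynomial.continuous q).continuousOn
        · exact (Polynomial.differentiable q).differentiableOn
        · intro x hx
          rw [interior_Icc] at hx
          rw [Polynomial.deriv, ← hGq]
          apply le_of_lt
          apply eval_pos_of_roots_lt G hG1 hG3
          intro r hr
          exact lt_of_le_of_lt (hβub r hr) hx.1
      have h1 := hmono (Set.left_mem_Icc.2 hβγ) (Set.right_mem_Icc.2 hβγ) hβγ
      simpa [hqγ] using h1
    -- derivative^[m] P evaluated at β is ≤ 0
    have hPQ : P = (X + C (lam i)) * Q := by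
      rw [hP, hQ, hs, ← Finset.mul_prod_erase Finset.univ _ (Finset.mem_univ i)]
    have hF : derivative^[m] P = (X + C (lam i)) * G + C ((m' : ℝ) + 1) * q := by
      rw [hPQ, hm', hG, hq, hm']
      exact iter_deriv_mul_linear Q (lam i) m'
    have hFβ : (derivative^[m] P).eval β ≤ 0 := by
      rw [hF]
      simp only [eval_add, eval_mul, eval_C, hGβ, mul_zero, zero_add]
      have h1 : (0:ℝ) < (m' : ℝ) + 1 := by positivity
      nlinarith
    have hβneg : β < 0 := by
      by_contra hcon
      push_neg at hcon
      have := hFpos β hcon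
      linarith
    -- conclusion
    have hG0 : 0 < G.eval 0 :=
      eval_pos_of_roots_lt G hG1 hG3 (fun r hr => lt_of_le_of_lt (hβub r hr) hβneg)
    have hQm : Q.coeff m = esymDel n (k - 1) lam i := by
      rw [hQ, Finset.prod_X_add_C_coeff s lam (by omega)]
      unfold esymDel
      rw [← hs, hscard]
      congr 2
      omega
    have hcoeff : G.eval 0 = ((m.descFactorial m : ℕ) : ℝ) * esymDel n (k - 1) lam i := by
      rw [← coeff_zero_eq_eval_zero, hG, coeff_iterate_derivative, nsmul_eq_mul, zero_add, hQm]
    rw [hcoeff] at hG0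
    have hd : 0 < ((m.descFactorial m : ℕ) : ℝ) := by
      rw [Nat.descFactorial_self]
      exact_mod_cast Nat.factorial_pos m
    nlinarith
end
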